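/- arXiv:2404.09284 — 12 statements merged into one kernel-verified Lean document; each statement's English description precedes it below -/
import Mathlib

section
/- Each Φw belongs to L²(ℝ; W); the map Φ : W → L²(ℝ; W) is linear and satisfies ⟨Φw₁, Φw₂⟩_{L²} = ⟨w₁, w₂⟩ for all w₁, w₂ ∈ W (so Φ is a linear isometry); and the operator P := Φ ∘ Φ*, where Φ* is the Hilbert-space adjoint of Φ, satisfies P ∘ P = P, P* = P, and range(P) = range(Φ), i.e. P is the orthogonal projection of L²(ℝ; W) onto the image of Φ. -/
/-!
Put `v y = e^{yD} w`. Then `d/dy ‖v y‖² = ⟪(D + D*) v y, v y⟫ = ‖Σ (v y)‖²`, so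
`∫_{-∞}^0 ‖Σ e^{yD} w‖² dy = ‖w‖² - lim_{y → -∞} ‖e^{yD} w‖²`. The limit vanishes: on a
finite-dimensional space `D + D*` is coercive, `c ‖v‖² ≤ ⟪(D + D*) v, v⟫`, whence
`‖e^{yD} w‖² ≤ e^{cy} ‖w‖²` for `y ≤ 0`. Thus `Φ` is a linear isometry, i.e. `Φ* Φ = 1`, and
the projection properties of `Φ Φ*` follow algebraically.
-/

open MeasureTheory RealInnerProductSpace NormedSpace Set Filter Topology ContinuousLinearMap

theorem integrableOn_Iic_deriv_of_nonneg' {g g' : ℝ → ℝ} {a l : ℝ}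
    (hderiv : ∀ x ∈ Iic a, HasDerivAt g (g' x) x) (g'pos : ∀ x ∈ Iio a, 0 ≤ g' x)
    (hg : Tendsto g atBot (𝓝 l)) : IntegrableOn g' (Iic a) := by
  have hrefl : IntegrableOn (fun x => g' (-x)) (Ioi (-a)) :=
    integrableOn_Ioi_deriv_of_nonneg' (g := fun x => -g (-x)) (l := -l)
      (fun x (hx : -a ≤ x) =>
        (((hderiv (-x) (neg_le.1 hx)).comp x (hasDerivAt_neg x)).neg).congr_deriv (by simp))
      (fun x (hx : -a < x) => g'pos (-x) (neg_lt.1 hx)) (hg.comp tendsto_neg_atTop_atBot).neg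
  simpa using Iff.mpr integrableOn_Iic_iff_integrableOn_Iio hrefl.comp_neg_Iio

theorem le_exp_mul_mul_of_mul_le_deriv {f f' : ℝ → ℝ} {c y : ℝ}
    (hf : ∀ x, HasDerivAt f (f' x) x) (hf' : ∀ x, c * f x ≤ f' x) (hy : y ≤ 0) :
    f y ≤ Real.exp (c * y) * f 0 := by
  have hmono : Monotone fun x => Real.exp (-(c * x)) * f x := by
    refine monotone_of_hasDerivAt_nonneg (f' := fun x => Real.exp (-(c * x)) * (f' x - c * f x))
      (fun x => ?_) fun x => mul_nonneg (Real.exp_pos _).le (sub_nonneg.2 (hf' x))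
    exact ((((hasDerivAt_id x).const_mul c).neg).exp.mul (hf x)).congr_deriv (by simp; ring)
  calc f y = Real.exp (c * y) * (Real.exp (-(c * y)) * f y) := by
        rw [← mul_assoc, ← Real.exp_add, add_neg_cancel, Real.exp_zero, one_mul]
    _ ≤ Real.exp (c * y) * f 0 := by
        gcongr
        simpa using hmono hy

theorem exists_pos_mul_norm_sq_le_inner_self {W : Type*} [NormedAddCommGroup W]
    [InnerProductSpace ℝ W] [FiniteDimensional ℝ W] (T : W →L[ℝ] W)
    (hT : ∀ w, w ≠ 0 → 0 < ⟪T w, w⟫) : ∃ c > 0, ∀ w, c * ‖w‖ ^ 2 ≤ ⟪T w, w⟫ := by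
  rcases subsingleton_or_nontrivial W with hW | hW
  · exact ⟨1, one_pos, fun w => by simp [Subsingleton.elim w 0]⟩
  obtain ⟨z, hz, hmin⟩ := (isCompact_sphere (0 : W) 1).exists_isMinOn
    (NormedSpace.sphere_nonempty.2 zero_le_one)
    (T.continuous.inner (𝕜 := ℝ) continuous_id).continuousOn
  refine ⟨⟪T z, z⟫, hT z (ne_zero_of_mem_unit_sphere ⟨z, hz⟩), fun w => ?_⟩
  rcases eq_or_ne w 0 with rfl | hw
  · simp
  have hw' : 0 < ‖w‖ := norm_pos_iff.2 hw
  have hscale : ⟪T (‖w‖⁻¹ • w), ‖w‖⁻¹ • w⟫ = ‖w‖⁻¹ ^ 2 * ⟪T w, w⟫ := by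
    rw [map_smul, real_inner_smul_left, real_inner_smul_right]; ring
  have hmin_w : ⟪T z, z⟫ ≤ ‖w‖⁻¹ ^ 2 * ⟪T w, w⟫ :=
    hscale ▸ hmin (show ‖w‖⁻¹ • w ∈ Metric.sphere (0 : W) 1 by simp [norm_smul, hw'.ne'])
  calc ⟪T z, z⟫ * ‖w‖ ^ 2 ≤ ‖w‖⁻¹ ^ 2 * ⟪T w, w⟫ * ‖w‖ ^ 2 := by gcongr
    _ = ⟪T w, w⟫ := by field_simp

section OperatorExponential

variable {E : Type*} [NormedAddCommGroup E] [NormedSpace ℝ E] [CompleteSpace E]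

theorem hasDerivAt_exp_smul_apply (A : E →L[ℝ] E) (w : E) (y : ℝ) :
    HasDerivAt (fun t : ℝ => exp (t • A) w) (A (exp (y • A) w)) y :=
  (ContinuousLinearMap.apply ℝ E w).hasFDerivAt.comp_hasDerivAt y
    (hasDerivAt_exp_smul_const' (𝕂 := ℝ) A y)

theorem continuous_exp_smul_apply (A : E →L[ℝ] E) (w : E) :
    Continuous fun t : ℝ => exp (t • A) w :=
  continuous_iff_continuousAt.2 fun y => (hasDerivAt_exp_smul_apply A w y).continuousAt

end OperatorExponential

section Decay

variable {W : Type*} [NormedAddCommGroup W] [InnerProductSpace ℝ W] [CompleteSpace W]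
  (D : W →L[ℝ] W)

theorem hasDerivAt_norm_sq_exp_smul_apply (w : W) (y : ℝ) :
    HasDerivAt (fun t : ℝ => ‖exp (t • D) w‖ ^ 2)
      ⟪(D + adjoint D) (exp (y • D) w), exp (y • D) w⟫ y := by
  convert (hasDerivAt_exp_smul_apply D w y).norm_sq using 1
  rw [add_apply, inner_add_left, adjoint_inner_left, real_inner_comm]
  ring

theorem tendsto_norm_sq_exp_smul_apply_atBot [FiniteDimensional ℝ W]
    (hpos : ∀ w, w ≠ 0 → 0 < ⟪(D + adjoint D) w, w⟫) (w : W) :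
    Tendsto (fun y : ℝ => ‖exp (y • D) w‖ ^ 2) atBot (𝓝 0) := by
  obtain ⟨c, hc, hcoer⟩ := exists_pos_mul_norm_sq_le_inner_self _ hpos
  have hdecay : Tendsto (fun y => Real.exp (c * y) * ‖w‖ ^ 2) atBot (𝓝 0) := by
    simpa using (Real.tendsto_exp_atBot.comp (tendsto_id.const_mul_atBot hc)).mul_const (‖w‖ ^ 2)
  refine squeeze_zero' (Eventually.of_forall fun y => by positivity) ?_ hdecay
  filter_upwards [Iic_mem_atBot 0] with y hy
  simpa using le_exp_mul_mul_of_mul_le_deriv (hasDerivAt_norm_sq_exp_smul_apply D w)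
    (fun x => hcoer _) hy

variable {V : Type*} [NormedAddCommGroup V] [InnerProductSpace ℝ V] [CompleteSpace V]
  {D} {Sig : W →L[ℝ] V}

theorem hasDerivAt_norm_sq_exp_smul_apply_of_adjoint_comp_self
    (hSig : adjoint Sig ∘L Sig = D + adjoint D) (w : W) (y : ℝ) :
    HasDerivAt (fun t : ℝ => ‖exp (t • D) w‖ ^ 2) (‖Sig (exp (y • D) w)‖ ^ 2) y := by
  simpa [apply_norm_sq_eq_inner_adjoint_left, hSig] using hasDerivAt_norm_sq_exp_smul_apply D w y

variable [FiniteDimensional ℝ W]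

theorem integrableOn_Iic_norm_sq_apply_exp_smul (hSig : adjoint Sig ∘L Sig = D + adjoint D)
    (hpos : ∀ w, w ≠ 0 → 0 < ⟪(D + adjoint D) w, w⟫) (w : W) :
    IntegrableOn (fun y : ℝ => ‖Sig (exp (y • D) w)‖ ^ 2) (Iic 0) :=
  integrableOn_Iic_deriv_of_nonneg'
    (fun y _ => hasDerivAt_norm_sq_exp_smul_apply_of_adjoint_comp_self hSig w y)
    (fun y _ => by positivity) (tendsto_norm_sq_exp_smul_apply_atBot D hpos w)

theorem integral_Iic_norm_sq_apply_exp_smul (hSig : adjoint Sig ∘L Sig = D + adjoint D)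
    (hpos : ∀ w, w ≠ 0 → 0 < ⟪(D + adjoint D) w, w⟫) (w : W) :
    ∫ y in Iic (0 : ℝ), ‖Sig (exp (y • D) w)‖ ^ 2 = ‖w‖ ^ 2 := by
  rw [integral_Iic_of_hasDerivAt_of_tendsto'
    (fun y _ => hasDerivAt_norm_sq_exp_smul_apply_of_adjoint_comp_self hSig w y)
    (integrableOn_Iic_norm_sq_apply_exp_smul hSig hpos w)
    (tendsto_norm_sq_exp_smul_apply_atBot D hpos w)]
  simp

end Decay

theorem MeasureTheory.MemLp.norm_toLp_sq {α E : Type*} [MeasurableSpace α] {μ : Measure α}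
    [NormedAddCommGroup E] [InnerProductSpace ℝ E] {f : α → E} (hf : MemLp f 2 μ) :
    ‖hf.toLp f‖ ^ 2 = ∫ a, ‖f a‖ ^ 2 ∂μ := by
  rw [← real_inner_self_eq_norm_sq, L2.inner_def]
  refine integral_congr_ae ?_
  filter_upwards [hf.coeFn_toLp] with a ha
  rw [ha, real_inner_self_eq_norm_sq]

section Dilation

variable {W V : Type*} [NormedAddCommGroup W] [InnerProductSpace ℝ W]
  [NormedAddCommGroup V] [InnerProductSpace ℝ V] {D : W →L[ℝ] W} {Sig : W →L[ℝ] V}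

variable (D Sig) in
noncomputable def dilationFun (w : W) : ℝ → V :=
  (Iic 0).indicator fun y => Sig (exp (y • D) w)

variable (D Sig) in
theorem dilationFun_add (w₁ w₂ : W) :
    dilationFun D Sig (w₁ + w₂) = dilationFun D Sig w₁ + dilationFun D Sig w₂ := by
  simp only [dilationFun, map_add, indicator_add]
  rfl

variable (D Sig) in
theorem dilationFun_smul (r : ℝ) (w : W) :
    dilationFun D Sig (r • w) = r • dilationFun D Sig w := by
  simp only [dilationFun, map_smul, indicator_smul]
  rfl

variable [FiniteDimensional ℝ W] [CompleteSpace V]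

theorem memLp_dilationFun (hSig : adjoint Sig ∘L Sig = D + adjoint D)
    (hpos : ∀ w, w ≠ 0 → 0 < ⟪(D + adjoint D) w, w⟫) (w : W) :
    MemLp (dilationFun D Sig w) 2 volume := by
  have hcont : Continuous fun y : ℝ => Sig (exp (y • D) w) :=
    Sig.continuous.comp (continuous_exp_smul_apply D w)
  rw [dilationFun, memLp_indicator_iff_restrict measurableSet_Iic,
    memLp_two_iff_integrable_sq_norm hcont.aestronglyMeasurable]
  exact integrableOn_Iic_norm_sq_apply_exp_smul hSig hpos w

theorem norm_toLp_dilationFun (hSig : adjoint Sig ∘L Sig = D + adjoint D)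
    (hpos : ∀ w, w ≠ 0 → 0 < ⟪(D + adjoint D) w, w⟫) (w : W) :
    ‖(memLp_dilationFun hSig hpos w).toLp‖ = ‖w‖ := by
  refine (sq_eq_sq₀ (norm_nonneg _) (norm_nonneg _)).1 ?_
  rw [MemLp.norm_toLp_sq, dilationFun, ← integral_Iic_norm_sq_apply_exp_smul hSig hpos w,
    ← integral_indicator measurableSet_Iic]
  exact congrArg _ (indicator_comp_of_zero (g := fun v : V => ‖v‖ ^ 2) (by simp)).symm

noncomputable def dilation (hSig : adjoint Sig ∘L Sig = D + adjoint D)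
    (hpos : ∀ w, w ≠ 0 → 0 < ⟪(D + adjoint D) w, w⟫) : W →ₗᵢ[ℝ] Lp V 2 (volume : Measure ℝ) where
  toFun w := (memLp_dilationFun hSig hpos w).toLp
  map_add' w₁ w₂ := by
    simp_rw [dilationFun_add]
    exact MemLp.toLp_add _ _
  map_smul' r w := by
    simp_rw [dilationFun_smul]
    exact MemLp.toLp_const_smul _ _
  norm_map' := norm_toLp_dilationFun hSig hpos

end Dilation

namespace ContinuousLinearMap

variable {𝕜 H K : Type*} [RCLike 𝕜] [NormedAddCommGroup H] [InnerProductSpace 𝕜 H] [CompleteSpace H]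
  [NormedAddCommGroup K] [InnerProductSpace 𝕜 K] [CompleteSpace K] {u : H →L[𝕜] K}

theorem self_comp_adjoint_idempotent (hu : adjoint u ∘L u = 1) :
    (u ∘L adjoint u) ∘L (u ∘L adjoint u) = u ∘L adjoint u := by
  rw [comp_assoc, ← comp_assoc (adjoint u), hu, one_def, id_comp]

theorem adjoint_self_comp_adjoint (u : H →L[𝕜] K) : adjoint (u ∘L adjoint u) = u ∘L adjoint u := by
  rw [adjoint_comp, adjoint_adjoint]

theorem range_self_comp_adjoint_of_adjoint_comp_self (hu : adjoint u ∘L u = 1) :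
    Set.range (u ∘L adjoint u) = Set.range u := by
  rw [coe_comp]
  refine (Set.range_comp_subset_range _ _).antisymm ?_
  rintro _ ⟨w, rfl⟩
  exact ⟨u w, by rw [Function.comp_apply, ← comp_apply (adjoint u), hu]; rfl⟩

end ContinuousLinearMap

theorem explicit_dilation_isometry_and_projection_general
    {W : Type*} [NormedAddCommGroup W] [InnerProductSpace ℝ W] [FiniteDimensional ℝ W]
    (D : W →L[ℝ] W)
    (hpos : ∀ w : W, w ≠ 0 → 0 < ⟪(D + ContinuousLinearMap.adjoint D) w, w⟫)
    (Sig : W →L[ℝ] W)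
    (hSigsa : ContinuousLinearMap.adjoint Sig = Sig)
    (hSigsq : Sig ∘L Sig = D + ContinuousLinearMap.adjoint D) :
    (∀ w : W,
      MemLp (fun y : ℝ =>
        Set.indicator (Set.Iic (0 : ℝ)) (fun y => Sig (NormedSpace.exp (y • D) w)) y)
        2 volume) ∧
    ∃ Φ : W →L[ℝ] Lp W 2 (volume : Measure ℝ),
      (∀ w : W, ∀ᵐ y : ℝ ∂volume,
        (Φ w) y =
          Set.indicator (Set.Iic (0 : ℝ)) (fun y => Sig (NormedSpace.exp (y • D) w)) y) ∧
      (∀ w₁ w₂ : W, ⟪Φ w₁, Φ w₂⟫ = ⟪w₁, w₂⟫) ∧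
      (Φ ∘L ContinuousLinearMap.adjoint Φ) ∘L (Φ ∘L ContinuousLinearMap.adjoint Φ)
        = Φ ∘L ContinuousLinearMap.adjoint Φ ∧
      ContinuousLinearMap.adjoint (Φ ∘L ContinuousLinearMap.adjoint Φ)
        = Φ ∘L ContinuousLinearMap.adjoint Φ ∧
      Set.range ⇑(Φ ∘L ContinuousLinearMap.adjoint Φ) = Set.range ⇑Φ := by
  have hSig : adjoint Sig ∘L Sig = D + adjoint D := by rw [hSigsa, hSigsq]
  set Φ := dilation hSig hpos
  have hΦ : adjoint Φ.toContinuousLinearMap ∘L Φ.toContinuousLinearMap = 1 :=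
    Φ.adjoint_comp_self
  exact ⟨memLp_dilationFun hSig hpos, Φ.toContinuousLinearMap,
    fun w => (memLp_dilationFun hSig hpos w).coeFn_toLp, Φ.inner_map_map,
    self_comp_adjoint_idempotent hΦ, adjoint_self_comp_adjoint _,
    range_self_comp_adjoint_of_adjoint_comp_self hΦ⟩

/-- Let `W` be a finite-dimensional real inner product space,
`D : W → W` a linear map with `⟨(D + D*)w, w⟩ > 0` for `w ≠ 0`, and `Σ` the
self-adjoint positive semidefinite square root of `D + D*`.  Define
`(Φw)(y) = Σ(e^{yD} w)` for `y ≤ 0` and `(Φw)(y) = 0` for `y > 0`.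
Then each `Φw` belongs to `L²(ℝ; W)`; `Φ : W → L²(ℝ; W)` is a linear isometry
for the inner products, `⟨Φw₁, Φw₂⟩ = ⟨w₁, w₂⟩`; and `P := Φ ∘ Φ*` satisfies
`P ∘ P = P`, `P* = P`, and `range P = range Φ`, i.e. `P` is the orthogonal
projection of `L²(ℝ; W)` onto the image of `Φ`. -/
theorem explicit_dilation_isometry_and_projection
    {W : Type*} [NormedAddCommGroup W] [InnerProductSpace ℝ W] [FiniteDimensional ℝ W]
    (D : W →L[ℝ] W)
    (hpos : ∀ w : W, w ≠ 0 → 0 < ⟪(D + ContinuousLinearMap.adjoint D) w, w⟫)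
    (Sig : W →L[ℝ] W)
    (hSigsa : ContinuousLinearMap.adjoint Sig = Sig)
    (hSigpos : ∀ w : W, 0 ≤ ⟪Sig w, w⟫)
    (hSigsq : Sig ∘L Sig = D + ContinuousLinearMap.adjoint D) :
    (∀ w : W,
      MemLp (fun y : ℝ =>
        Set.indicator (Set.Iic (0 : ℝ)) (fun y => Sig (NormedSpace.exp (y • D) w)) y)
        2 volume) ∧
    ∃ Φ : W →L[ℝ] Lp W 2 (volume : Measure ℝ),
      (∀ w : W, ∀ᵐ y : ℝ ∂volume,
        (Φ w) y =
          Set.indicator (Set.Iic (0 : ℝ)) (fun y => Sig (NormedSpace.exp (y • D) w)) y) ∧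
      (∀ w₁ w₂ : W, ⟪Φ w₁, Φ w₂⟫ = ⟪w₁, w₂⟫) ∧
      (Φ ∘L ContinuousLinearMap.adjoint Φ) ∘L (Φ ∘L ContinuousLinearMap.adjoint Φ)
        = Φ ∘L ContinuousLinearMap.adjoint Φ ∧
      ContinuousLinearMap.adjoint (Φ ∘L ContinuousLinearMap.adjoint Φ)
        = Φ ∘L ContinuousLinearMap.adjoint Φ ∧
      Set.range ⇑(Φ ∘L ContinuousLinearMap.adjoint Φ) = Set.range ⇑Φ :=
  explicit_dilation_isometry_and_projection_general D hpos Sig hSigsa hSigsq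
end

section
/- Assume P(S_t v) = e^{−tD} v for all t ≥ 0 and all v ∈ W. If g ∈ W satisfies ⟨g, D g⟩ > 0, then the map t ↦ S_t g is not differentiable at t = 0; that is, there is no h ∈ H with (S_t g − g)/t → h in H as t → 0. In particular, g does not belong to the domain of the generator of the group (S_t). -/
/-!
Let `F t = ⟪g, S t g⟫`. Unitarity and the group law give `F (-t) = ⟪S t g, g⟫ = F t`, so `F` is
even, and differentiability of the orbit `t ↦ S t g` at `0` would make `F` differentiable there
with derivative `0`. On the other hand, since `g ∈ W`, for `t ≥ 0` the compression property gives
`F t = ⟪g, P (S t g)⟫ = ⟪g, exp (-t D) g⟫`, whose right derivative at `0` is `-⟪g, D g⟫ < 0`.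
-/

open RealInnerProductSpace

/-- Helper instance: the ring of continuous endomorphisms of a submodule of an inner
product space, with its operator-norm topology, is a topological ring.  (This instance
exists in Mathlib but is not found by instance search at reducible transparency.) -/
noncomputable instance topologicalRing_clm_submodule'
    {H : Type*} [NormedAddCommGroup H] [InnerProductSpace ℝ H]
    (W : Submodule ℝ H) : IsTopologicalRing (↥W →L[ℝ] ↥W) := by
  exact @NonUnitalSeminormedRing.toIsTopologicalRing (↥W →L[ℝ] ↥W) inferInstance

open Filter Topology Set

theorem HasDerivAt.eq_zero_of_even {𝕜 F : Type*} [NontriviallyNormedField 𝕜] [CharZero 𝕜]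
    [NormedAddCommGroup F] [NormedSpace 𝕜 F] {f : 𝕜 → F} {f' : F}
    (hf : HasDerivAt f f' 0) (he : f.Even) : f' = 0 := by
  have hneg : HasDerivAt f (-f') 0 := by
    have hcomp := hf.scomp_of_eq (0 : 𝕜) (hasDerivAt_neg' 0) neg_zero.symm
    rwa [show f ∘ (fun x => -x) = f from funext he, neg_one_smul] at hcomp
  have htwo : (2 : 𝕜) • f' = 0 := by
    rw [two_smul]
    nth_rewrite 2 [hf.unique hneg]
    exact add_neg_cancel f'
  exact (smul_eq_zero.mp htwo).resolve_left two_ne_zero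

section IsometryGroup

variable {H : Type*} [NormedAddCommGroup H] [InnerProductSpace ℝ H] {S : ℝ → H →L[ℝ] H}

theorem inner_apply_neg_eq_inner_apply (hS0 : S 0 = ContinuousLinearMap.id ℝ H)
    (hSadd : ∀ t s : ℝ, S (t + s) = (S t) ∘L (S s)) (hSiso : ∀ (t : ℝ) (x : H), ‖S t x‖ = ‖x‖)
    (t : ℝ) (x y : H) : ⟪x, S (-t) y⟫ = ⟪S t x, y⟫ := by
  have hinv : S t (S (-t) y) = y := by
    simpa [hS0] using (congrArg (· y) (hSadd t (-t))).symm
  rw [← LinearIsometry.inner_map_map ⟨(S t : H →ₗ[ℝ] H), hSiso t⟩]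
  exact congrArg _ hinv

theorem even_inner_apply_self (hS0 : S 0 = ContinuousLinearMap.id ℝ H)
    (hSadd : ∀ t s : ℝ, S (t + s) = (S t) ∘L (S s)) (hSiso : ∀ (t : ℝ) (x : H), ‖S t x‖ = ‖x‖)
    (x : H) : (fun t => ⟪x, S t x⟫).Even := fun t => by
  dsimp only
  rw [inner_apply_neg_eq_inner_apply hS0 hSadd hSiso, real_inner_comm]

theorem hasDerivAt_apply_of_tendsto (hS0 : S 0 = ContinuousLinearMap.id ℝ H) {x h : H}
    (hx : Tendsto (fun t : ℝ => t⁻¹ • (S t x - x)) (𝓝[≠] 0) (𝓝 h)) :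
    HasDerivAt (fun t => S t x) h 0 := by
  rw [hasDerivAt_iff_tendsto_slope]
  refine hx.congr fun t => ?_
  simp [slope_def_module, hS0]

end IsometryGroup

theorem hasDerivAt_inner_exp_neg_smul {W : Type*} [NormedAddCommGroup W] [InnerProductSpace ℝ W]
    [CompleteSpace W] (D : W →L[ℝ] W) (v : W) :
    HasDerivAt (fun t : ℝ => ⟪v, NormedSpace.exp ((-t) • D) v⟫) (-⟪v, D v⟫) 0 := by
  have hexp : HasDerivAt (fun t : ℝ => NormedSpace.exp (t • -D)) (-D) 0 := by
    simpa using hasDerivAt_exp_smul_const (𝕂 := ℝ) (-D) 0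
  simp_rw [neg_smul, ← smul_neg]
  simpa using (hasDerivAt_const (0 : ℝ) v).inner ℝ (hexp.clm_apply (hasDerivAt_const 0 v))

theorem coupling_vector_not_in_generator_domain_general
    {H : Type*} [NormedAddCommGroup H] [InnerProductSpace ℝ H]
    (S : ℝ → H →L[ℝ] H)
    (hS0 : S 0 = ContinuousLinearMap.id ℝ H)
    (hSadd : ∀ t s : ℝ, S (t + s) = (S t) ∘L (S s))
    (hSiso : ∀ (t : ℝ) (x : H), ‖S t x‖ = ‖x‖)
    (W : Submodule ℝ H) [FiniteDimensional ℝ W]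
    (D : W →L[ℝ] W)
    (hcomp : ∀ t : ℝ, 0 ≤ t → ∀ v : W,
      W.orthogonalProjectionOnto (S t (v : H)) = NormedSpace.exp ((-t) • D) v)
    (g : W) (hg : 0 < ⟪g, D g⟫) :
    ¬ ∃ h : H, Filter.Tendsto (fun t : ℝ => t⁻¹ • (S t (g : H) - (g : H)))
        (nhdsWithin 0 {0}ᶜ) (nhds h) := by
  rintro ⟨h, hh⟩
  have horbit : HasDerivAt (fun t => ⟪(g : H), S t g⟫) ⟪(g : H), h⟫ 0 := by
    simpa using (hasDerivAt_const (0 : ℝ) (g : H)).inner ℝ (hasDerivAt_apply_of_tendsto hS0 hh)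
  have hzero := horbit.eq_zero_of_even (even_inner_apply_self hS0 hSadd hSiso g)
  have hcoeff : ∀ t ∈ Ici (0 : ℝ), ⟪(g : H), S t g⟫ = ⟪g, NormedSpace.exp ((-t) • D) g⟫ :=
    fun t ht => by rw [← hcomp t ht, Submodule.inner_orthogonalProjectionOnto_eq_of_mem_left]
  have hright : HasDerivWithinAt (fun t => ⟪(g : H), S t g⟫) (-⟪g, D g⟫) (Ici 0) 0 :=
    (hasDerivAt_inner_exp_neg_smul D g).hasDerivWithinAt.congr_of_mem hcoeff self_mem_Ici
  have hderiv := (uniqueDiffWithinAt_Ici 0).eq_deriv _ horbit.hasDerivWithinAt hright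
  linarith

/-- Let `H` be a real Hilbert space and `(S_t)_{t∈ℝ}` a group of
unitary operators on `H`, `W ⊆ H` a finite-dimensional subspace with orthogonal
projection `P`, and `D : W → W` linear with the compression property
`P(S_t v) = e^{−tD} v` for `t ≥ 0`, `v ∈ W`.  If `g ∈ W` satisfies `⟨g, Dg⟩ > 0`,
then `t ↦ S_t g` is not differentiable at `t = 0`: there is no `h ∈ H` with
`(S_t g − g)/t → h` as `t → 0`.  In particular `g` is not in the domain of the
generator of the group `(S_t)`. -/
theorem coupling_vector_not_in_generator_domain
    {H : Type*} [NormedAddCommGroup H] [InnerProductSpace ℝ H] [CompleteSpace H]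
    (S : ℝ → H →L[ℝ] H)
    (hS0 : S 0 = ContinuousLinearMap.id ℝ H)
    (hSadd : ∀ t s : ℝ, S (t + s) = (S t) ∘L (S s))
    (hSiso : ∀ (t : ℝ) (x : H), ‖S t x‖ = ‖x‖)
    (hSsurj : ∀ t : ℝ, Function.Surjective (S t))
    (W : Submodule ℝ H) [FiniteDimensional ℝ W]
    (D : W →L[ℝ] W)
    (hcomp : ∀ t : ℝ, 0 ≤ t → ∀ v : W,
      W.orthogonalProjectionOnto (S t (v : H)) = NormedSpace.exp ((-t) • D) v)
    (g : W) (hg : 0 < ⟪g, D g⟫) :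
    ¬ ∃ h : H, Filter.Tendsto (fun t : ℝ => t⁻¹ • (S t (g : H) - (g : H)))
        (nhdsWithin 0 {0}ᶜ) (nhds h) :=
  coupling_vector_not_in_generator_domain_general S hS0 hSadd hSiso W D hcomp g hg
end

section
/- For every (z₀, η₀) ∈ Z × H there exists a unique pair (z, η) such that z : ℝ → Z is continuously differentiable, η : ℝ → H is continuous, z(0) = z₀, η(0) = η₀, and for all t ∈ ℝ: z'(t) = J_A(∇H_A(z(t)) + C*(η(t))) and η(t) = S_t(η₀ + C z₀) − C z(t) + ∫₀ᵗ S_{t−s}(C z'(s)) ds. -/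
/-!
In the interaction picture `ξ t = S (-t) (η t + C (z t))` the Duhamel formula for `η` becomes
the differential equation `ξ' = S (-t) (C z')`, so `(z, ξ)` solves an ODE in `Z × H` whose
vector field is Lipschitz in `(z, ξ)` uniformly in `t`, since every `S t` is an isometry.
Such an ODE has a unique global solution: existence comes from the contraction principle on
bounded continuous `y` with `x t = x₀ + exp (k * |t|) • y t` (Bielecki's weighted norm; for a
Lipschitz constant `K`, `k = 2K + 1` makes the Picard map `1/2`-Lipschitz), uniqueness from
Grönwall's inequality.
-/

open Real Set Function intervalIntegral
open scoped NNReal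

noncomputable section BieleckiPicard

variable {E : Type*} [NormedAddCommGroup E] [NormedSpace ℝ E]

theorem norm_integral_le_div_mul_exp {φ : ℝ → E} {M k t : ℝ} (hk : 0 < k) (ht : 0 ≤ t)
    (hφ : ∀ s ∈ Icc 0 t, ‖φ s‖ ≤ M * exp (k * s)) :
    ‖∫ s in 0..t, φ s‖ ≤ M / k * exp (k * t) := by
  have hM : 0 ≤ M := by simpa using (norm_nonneg _).trans (hφ 0 ⟨le_rfl, ht⟩)
  calc ‖∫ s in 0..t, φ s‖ ≤ ∫ s in 0..t, M * exp (k * s) :=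
        norm_integral_le_of_norm_le ht (.of_forall fun s hs => hφ s (Ioc_subset_Icc_self hs))
          ((by fun_prop : Continuous fun s => M * exp (k * s)).intervalIntegrable _ _)
    _ = M / k * (exp (k * t) - 1) := by
        rw [integral_const_mul, integral_comp_mul_left (fun s => exp s) hk.ne', integral_exp]
        simp only [mul_zero, exp_zero, smul_eq_mul]; ring
    _ ≤ M / k * exp (k * t) := by gcongr; linarith

theorem norm_exp_neg_smul_integral_le {φ : ℝ → E} {M k : ℝ} (hk : 0 < k)
    (hφ : ∀ s, ‖φ s‖ ≤ M * exp (k * |s|)) (t : ℝ) :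
    ‖exp (-(k * |t|)) • ∫ s in 0..t, φ s‖ ≤ M / k := by
  have hint : ‖∫ s in 0..t, φ s‖ ≤ M / k * exp (k * |t|) := by
    rcases le_total 0 t with ht | ht
    · rw [abs_of_nonneg ht]
      exact norm_integral_le_div_mul_exp hk ht fun s hs => by
        simpa [abs_of_nonneg hs.1] using hφ s
    · have hreflect : ∫ s in 0..t, φ s = -∫ s in 0..-t, φ (-s) := by
        rw [integral_comp_neg, integral_symm]; simp
      rw [hreflect, norm_neg, abs_of_nonpos ht]
      exact norm_integral_le_div_mul_exp hk (neg_nonneg.2 ht) fun s hs => by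
        simpa [abs_of_nonneg hs.1] using hφ (-s)
  rw [norm_smul, norm_of_nonneg (exp_nonneg _), exp_neg]
  calc (exp (k * |t|))⁻¹ * ‖∫ s in 0..t, φ s‖ ≤ (exp (k * |t|))⁻¹ * (M / k * exp (k * |t|)) := by
        gcongr
    _ = M / k := by field_simp

variable {f : ℝ → E → E} {K : ℝ≥0} {A : ℝ}

def weightedCurve (x₀ : E) (k : ℝ) (y : ℝ → E) (t : ℝ) : E := x₀ + exp (k * |t|) • y t

def bieleckiPicard (f : ℝ → E → E) (x₀ : E) (k : ℝ) (y : ℝ → E) (t : ℝ) : E :=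
  exp (-(k * |t|)) • ∫ s in 0..t, f s (weightedCurve x₀ k y s)

theorem continuous_weightedCurve {y : ℝ → E} (hy : Continuous y) (x₀ : E) (k : ℝ) :
    Continuous (weightedCurve x₀ k y) := by
  unfold weightedCurve; fun_prop

theorem norm_apply_weightedCurve_sub_le (hLip : ∀ t, LipschitzWith K (f t)) (x₀ : E) (k : ℝ)
    (y y' : BoundedContinuousFunction ℝ E) (s : ℝ) :
    ‖f s (weightedCurve x₀ k y s) - f s (weightedCurve x₀ k y' s)‖ ≤
      K * dist y y' * exp (k * |s|) := by
  calc ‖f s (weightedCurve x₀ k y s) - f s (weightedCurve x₀ k y' s)‖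
      ≤ K * ‖weightedCurve x₀ k y s - weightedCurve x₀ k y' s‖ := by
        simpa only [dist_eq_norm] using (hLip s).dist_le_mul _ _
    _ = K * (exp (k * |s|) * ‖y s - y' s‖) := by
        simp [weightedCurve, ← smul_sub, norm_smul]
    _ ≤ K * dist y y' * exp (k * |s|) := by
        rw [mul_left_comm, mul_comm _ (exp _)]
        gcongr
        simpa [dist_eq_norm] using BoundedContinuousFunction.dist_coe_le_dist (f := y) (g := y') s

theorem norm_apply_weightedCurve_le (hLip : ∀ t, LipschitzWith K (f t)) (hbdd : ∀ t, ‖f t 0‖ ≤ A)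
    (x₀ : E) {k : ℝ} (hk : 0 ≤ k) (y : BoundedContinuousFunction ℝ E) (s : ℝ) :
    ‖f s (weightedCurve x₀ k y s)‖ ≤ (A + K * (‖x₀‖ + ‖y‖)) * exp (k * |s|) := by
  have hexp : 1 ≤ exp (k * |s|) := one_le_exp (by positivity)
  have hA : 0 ≤ A := (norm_nonneg _).trans (hbdd 0)
  calc ‖f s (weightedCurve x₀ k y s)‖ ≤ ‖f s 0‖ + ‖f s (weightedCurve x₀ k y s) - f s 0‖ :=
        norm_le_norm_add_norm_sub' _ _
    _ ≤ ‖f s 0‖ + K * ‖weightedCurve x₀ k y s‖ := by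
        gcongr
        simpa [dist_eq_norm] using (hLip s).dist_le_mul _ 0
    _ ≤ A + K * (‖x₀‖ + exp (k * |s|) * ‖y‖) := by
        gcongr
        · exact hbdd s
        · refine (norm_add_le _ _).trans ?_
          rw [norm_smul, norm_of_nonneg (exp_nonneg _)]
          gcongr
          exact y.norm_coe_le_norm s
    _ ≤ (A + K * (‖x₀‖ + ‖y‖)) * exp (k * |s|) := by
        nlinarith [mul_le_mul_of_nonneg_left hexp hA,
          mul_le_mul_of_nonneg_left hexp (mul_nonneg K.coe_nonneg (norm_nonneg x₀))]

theorem continuous_apply_weightedCurve (hf : Continuous (uncurry f)) (x₀ : E) (k : ℝ)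
    {y : ℝ → E} (hy : Continuous y) : Continuous fun s => f s (weightedCurve x₀ k y s) :=
  hf.comp (continuous_id.prodMk (continuous_weightedCurve hy x₀ k))

theorem continuous_bieleckiPicard (hf : Continuous (uncurry f)) (x₀ : E) (k : ℝ) {y : ℝ → E}
    (hy : Continuous y) : Continuous (bieleckiPicard f x₀ k y) :=
  (by fun_prop : Continuous fun t : ℝ => exp (-(k * |t|))).smul (continuous_primitive
    (fun a b => (continuous_apply_weightedCurve hf x₀ k hy).intervalIntegrable a b) 0)

theorem exists_continuous_eq_add_integral [CompleteSpace E] (hf : Continuous (uncurry f))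
    (hLip : ∀ t, LipschitzWith K (f t)) (hbdd : ∀ t, ‖f t 0‖ ≤ A) (x₀ : E) :
    ∃ x : ℝ → E, Continuous x ∧ ∀ t, x t = x₀ + ∫ s in 0..t, f s (x s) := by
  set k : ℝ := 2 * K + 1
  have hk : 0 < k := by positivity
  have hKk : K / k ≤ 1 / 2 := by rw [div_le_iff₀ hk]; linarith
  have hint (y : BoundedContinuousFunction ℝ E) :=
    continuous_apply_weightedCurve hf x₀ k y.continuous
  let Φ (y : BoundedContinuousFunction ℝ E) : BoundedContinuousFunction ℝ E :=
    .ofNormedAddCommGroup (bieleckiPicard f x₀ k y)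
      (continuous_bieleckiPicard hf x₀ k y.continuous) _
      (norm_exp_neg_smul_integral_le hk (norm_apply_weightedCurve_le hLip hbdd x₀ hk.le y))
  have hΦ : ContractingWith (1 / 2) Φ := by
    refine ⟨by norm_num, LipschitzWith.of_dist_le_mul fun y y' => ?_⟩
    refine (BoundedContinuousFunction.dist_le (by positivity)).2 fun t => ?_
    have hsub : Φ y t - Φ y' t =
        exp (-(k * |t|)) • ∫ s in 0..t, (f s (weightedCurve x₀ k y s) -
          f s (weightedCurve x₀ k y' s)) := by
      rw [integral_sub ((hint y).intervalIntegrable _ _) ((hint y').intervalIntegrable _ _),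
        smul_sub]
      rfl
    calc dist (Φ y t) (Φ y' t) ≤ K * dist y y' / k := by
          rw [dist_eq_norm, hsub]
          exact norm_exp_neg_smul_integral_le hk
            (norm_apply_weightedCurve_sub_le hLip x₀ k y y') t
      _ ≤ (1 / 2 : ℝ≥0) * dist y y' := by
          rw [mul_div_right_comm]; push_cast
          exact mul_le_mul_of_nonneg_right hKk dist_nonneg
  obtain ⟨y, hy⟩ : ∃ y, Φ y = y := ⟨_, hΦ.fixedPoint_isFixedPt⟩
  refine ⟨weightedCurve x₀ k y, continuous_weightedCurve y.continuous x₀ k, fun t => ?_⟩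
  have hyt : y t = bieleckiPicard f x₀ k y t := DFunLike.congr_fun hy.symm t
  rw [weightedCurve, hyt, bieleckiPicard, smul_smul, ← exp_add, add_neg_cancel, exp_zero,
    one_smul]

theorem exists_unique_hasDerivAt_of_lipschitzWith [CompleteSpace E]
    (hcont : ∀ x, Continuous (f · x))
    (hLip : ∀ t, LipschitzWith K (f t)) (hbdd : ∀ t, ‖f t 0‖ ≤ A) (x₀ : E) :
    ∃! x : ℝ → E, x 0 = x₀ ∧ ∀ t, HasDerivAt x (f t (x t)) t := by
  have hf : Continuous (uncurry f) := continuous_prod_of_continuous_lipschitzWith' _ K hLip hcont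
  obtain ⟨x, hx, hxeq⟩ := exists_continuous_eq_add_integral hf hLip hbdd x₀
  have hx0 : x 0 = x₀ := by simpa using hxeq 0
  have hderiv (t : ℝ) : HasDerivAt x (f t (x t)) t := by
    have hint : Continuous fun s => f s (x s) := hf.comp (continuous_id.prodMk hx)
    have := (hint.integral_hasStrictDerivAt 0 t).hasDerivAt.const_add x₀
    rwa [← funext hxeq] at this
  refine ⟨x, ⟨hx0, hderiv⟩, fun x' ⟨hx'0, hx'⟩ => ?_⟩
  exact ODE_solution_unique_univ (s := fun _ => univ) (fun t => (hLip t).lipschitzOnWith)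
    (fun t => ⟨hx' t, trivial⟩) (fun t => ⟨hderiv t, trivial⟩) (hx'0.trans hx0.symm)

end BieleckiPicard

section IsometryGroup

variable {H : Type*} [NormedAddCommGroup H] [NormedSpace ℝ H] {S : ℝ → H →L[ℝ] H}

theorem continuous_uncurry_of_norm_apply_eq (hSiso : ∀ t x, ‖S t x‖ = ‖x‖)
    (hScont : ∀ η, Continuous fun t => S t η) : Continuous fun q : ℝ × H => S q.1 q.2 :=
  continuous_prod_of_continuous_lipschitzWith' _ 1
    (fun t => (AddMonoidHomClass.isometry_of_norm (S t) (hSiso t)).lipschitz) hScont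

theorem apply_add_integral_apply_neg [CompleteSpace H] (hSadd : ∀ t s, S (t + s) = S t ∘L S s)
    (hS : Continuous fun q : ℝ × H => S q.1 q.2) {φ : ℝ → H} (hφ : Continuous φ) (ξ₀ : H)
    (t : ℝ) :
    S t (ξ₀ + ∫ s in 0..t, S (-s) (φ s)) = S t ξ₀ + ∫ s in 0..t, S (t - s) (φ s) := by
  have hint : Continuous fun s => S (-s) (φ s) := hS.comp (continuous_neg.prodMk hφ)
  rw [map_add, ← (S t).intervalIntegral_comp_comm (hint.intervalIntegrable 0 t)]
  simp only [sub_eq_add_neg, hSadd, ContinuousLinearMap.comp_apply]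

end IsometryGroup

noncomputable section MicroscopicSystem

open ContinuousLinearMap

variable {Z H : Type*} [NormedAddCommGroup Z] [InnerProductSpace ℝ Z] [CompleteSpace Z]
  [NormedAddCommGroup H] [InnerProductSpace ℝ H] [CompleteSpace H]
  (S : ℝ → H →L[ℝ] H) (JA : Z →L[ℝ] Z) (C : Z →L[ℝ] H) (HA : Z → ℝ)

/-- The right-hand side of `z' = J_A (∇H_A z + C† η)` in the interaction picture
`ξ t = S (-t) (η t + C (z t))`. -/
def interactionVelocity (t : ℝ) (p : Z × H) : Z :=
  JA (gradient HA p.1 + adjoint C (S t p.2 - C p.1))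

def interactionField (t : ℝ) (p : Z × H) : Z × H :=
  (interactionVelocity S JA C HA t p, S (-t) (C (interactionVelocity S JA C HA t p)))

def fromInteraction (x : ℝ → Z × H) : (ℝ → Z) × (ℝ → H) :=
  (fun t => (x t).1, fun t => S t (x t).2 - C (x t).1)

def IsMildSolution (z₀ : Z) (η₀ : H) (p : (ℝ → Z) × (ℝ → H)) : Prop :=
  ContDiff ℝ 1 p.1 ∧ Continuous p.2 ∧ p.1 0 = z₀ ∧ p.2 0 = η₀ ∧
    ∀ t : ℝ,
      deriv p.1 t = JA (gradient HA (p.1 t) + adjoint C (p.2 t)) ∧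
      p.2 t = S t (η₀ + C z₀) - C (p.1 t) + ∫ s in (0 : ℝ)..t, S (t - s) (C (deriv p.1 s))

variable {S JA C HA}

theorem lipschitzWith_interactionVelocity (hSiso : ∀ t x, ‖S t x‖ = ‖x‖) {L : ℝ≥0}
    (hLip : LipschitzWith L (gradient HA)) (t : ℝ) :
    LipschitzWith (‖JA‖₊ * (L + ‖adjoint C‖₊ * (1 + ‖C‖₊))) (interactionVelocity S JA C HA t) := by
  have hSt : LipschitzWith 1 (S t) := (AddMonoidHomClass.isometry_of_norm (S t) (hSiso t)).lipschitz
  have h := JA.lipschitz.comp ((hLip.comp LipschitzWith.prod_fst).add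
    ((adjoint C).lipschitz.comp ((hSt.comp LipschitzWith.prod_snd).sub
      (C.lipschitz.comp LipschitzWith.prod_fst))))
  simp only [mul_one] at h
  exact h

theorem lipschitzWith_interactionField (hSiso : ∀ t x, ‖S t x‖ = ‖x‖) {L : ℝ≥0}
    (hLip : LipschitzWith L (gradient HA)) (t : ℝ) :
    LipschitzWith ((1 + ‖C‖₊) * (‖JA‖₊ * (L + ‖adjoint C‖₊ * (1 + ‖C‖₊))))
      (interactionField S JA C HA t) := by
  have hv := lipschitzWith_interactionVelocity (JA := JA) (C := C) hSiso hLip t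
  have hSt : LipschitzWith 1 (S (-t)) :=
    (AddMonoidHomClass.isometry_of_norm (S (-t)) (hSiso (-t))).lipschitz
  refine (hv.prodMk (hSt.comp (C.lipschitz.comp hv))).weaken ?_
  rw [one_mul, add_mul, one_mul]
  exact max_le le_self_add le_add_self

theorem continuous_interactionVelocity_apply (hSiso : ∀ t x, ‖S t x‖ = ‖x‖)
    (hScont : ∀ η, Continuous fun t => S t η) {L : ℝ≥0} (hLip : LipschitzWith L (gradient HA))
    {x : ℝ → Z × H} (hx : Continuous x) :
    Continuous fun t => interactionVelocity S JA C HA t (x t) := by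
  have hv : Continuous (uncurry (interactionVelocity S JA C HA)) :=
    continuous_prod_of_continuous_lipschitzWith' _ _
      (lipschitzWith_interactionVelocity hSiso hLip) fun p => by
        have := hScont p.2
        simp only [uncurry_apply_pair, interactionVelocity]
        fun_prop
  exact hv.comp (continuous_id.prodMk hx)

theorem continuous_interactionField_apply (hSiso : ∀ t x, ‖S t x‖ = ‖x‖)
    (hScont : ∀ η, Continuous fun t => S t η) {L : ℝ≥0} (hLip : LipschitzWith L (gradient HA))
    {x : ℝ → Z × H} (hx : Continuous x) :
    Continuous fun t => interactionField S JA C HA t (x t) := by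
  have hv := continuous_interactionVelocity_apply (JA := JA) (C := C) hSiso hScont hLip hx
  exact hv.prodMk ((continuous_uncurry_of_norm_apply_eq hSiso hScont).comp
    (continuous_neg.prodMk (C.continuous.comp hv)))

theorem norm_interactionField_zero (hSiso : ∀ t x, ‖S t x‖ = ‖x‖) (t : ℝ) :
    ‖interactionField S JA C HA t 0‖ = ‖(JA (gradient HA 0), C (JA (gradient HA 0)))‖ := by
  simp [interactionField, interactionVelocity, Prod.norm_def, hSiso]

theorem isMildSolution_fromInteraction (hS0 : S 0 = ContinuousLinearMap.id ℝ H)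
    (hSadd : ∀ t s, S (t + s) = S t ∘L S s) (hSiso : ∀ t x, ‖S t x‖ = ‖x‖)
    (hScont : ∀ η, Continuous fun t => S t η) {L : ℝ≥0} (hLip : LipschitzWith L (gradient HA))
    {z₀ : Z} {η₀ : H} {x : ℝ → Z × H} (hx0 : x 0 = (z₀, η₀ + C z₀))
    (hx : ∀ t, HasDerivAt x (interactionField S JA C HA t (x t)) t) :
    IsMildSolution S JA C HA z₀ η₀ (fromInteraction S C x) := by
  have hS := continuous_uncurry_of_norm_apply_eq hSiso hScont
  have hxc : Continuous x := continuous_iff_continuousAt.2 fun t => (hx t).continuousAt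
  set v := fun t => interactionVelocity S JA C HA t (x t)
  have hv : Continuous v := continuous_interactionVelocity_apply hSiso hScont hLip hxc
  have hz (t : ℝ) : HasDerivAt (fun t => (x t).1) (v t) t :=
    (ContinuousLinearMap.fst ℝ Z H).hasFDerivAt.comp_hasDerivAt t (hx t)
  have hξ (t : ℝ) : HasDerivAt (fun t => (x t).2) (S (-t) (C (v t))) t :=
    (ContinuousLinearMap.snd ℝ Z H).hasFDerivAt.comp_hasDerivAt t (hx t)
  have hderiv : deriv (fun t => (x t).1) = v := funext fun t => (hz t).deriv
  have hξ_eq (t : ℝ) : (x t).2 = η₀ + C z₀ + ∫ s in 0..t, S (-s) (C (v s)) := by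
    rw [integral_eq_sub_of_hasDerivAt (fun s _ => hξ s)
      ((hS.comp (continuous_neg.prodMk (C.continuous.comp hv))).intervalIntegrable _ _), hx0]
    exact (add_sub_cancel _ _).symm
  refine ⟨contDiff_one_iff_deriv.2 ⟨fun t => (hz t).differentiableAt, hderiv ▸ hv⟩,
    (hS.comp (continuous_id.prodMk (continuous_snd.comp hxc))).sub
      (C.continuous.comp (continuous_fst.comp hxc)),
    by simp [fromInteraction, hx0], by simp [fromInteraction, hx0, hS0], fun t => ⟨?_, ?_⟩⟩
  · simp only [fromInteraction, hderiv]
    rfl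
  · simp only [fromInteraction, hderiv]
    rw [hξ_eq t, apply_add_integral_apply_neg (φ := fun s => C (v s)) hSadd hS
      (C.continuous.comp hv)]
    abel

theorem exists_hasDerivAt_interactionField_of_isMildSolution
    (hSadd : ∀ t s, S (t + s) = S t ∘L S s) (hSiso : ∀ t x, ‖S t x‖ = ‖x‖)
    (hScont : ∀ η, Continuous fun t => S t η) {z₀ : Z} {η₀ : H} {p : (ℝ → Z) × (ℝ → H)}
    (hp : IsMildSolution S JA C HA z₀ η₀ p) :
    ∃ x : ℝ → Z × H, x 0 = (z₀, η₀ + C z₀) ∧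
      (∀ t, HasDerivAt x (interactionField S JA C HA t (x t)) t) ∧ fromInteraction S C x = p := by
  obtain ⟨hz, -, hz0, -, hsol⟩ := hp
  have hS := continuous_uncurry_of_norm_apply_eq hSiso hScont
  have hz' : Continuous (deriv p.1) := hz.continuous_deriv le_rfl
  have hφ : Continuous fun s => S (-s) (C (deriv p.1 s)) :=
    hS.comp (continuous_neg.prodMk (C.continuous.comp hz'))
  set ξ := fun t => η₀ + C z₀ + ∫ s in 0..t, S (-s) (C (deriv p.1 s))
  have hSξ (t : ℝ) : S t (ξ t) - C (p.1 t) = p.2 t := by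
    rw [apply_add_integral_apply_neg (φ := fun s => C (deriv p.1 s)) hSadd hS
      (C.continuous.comp hz'), (hsol t).2]
    abel
  have hv (t : ℝ) : interactionVelocity S JA C HA t (p.1 t, ξ t) = deriv p.1 t := by
    simp only [interactionVelocity, hSξ, (hsol t).1]
  refine ⟨fun t => (p.1 t, ξ t), by simp [hz0, ξ], fun t => ?_, Prod.ext rfl (funext hSξ)⟩
  rw [interactionField, hv t]
  exact (hz.differentiable one_ne_zero t).hasDerivAt.prodMk
    ((hφ.integral_hasStrictDerivAt 0 t).hasDerivAt.const_add _)

end MicroscopicSystem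

theorem microscopic_system_wellposed_general
    {Z : Type*} [NormedAddCommGroup Z] [InnerProductSpace ℝ Z] [FiniteDimensional ℝ Z]
    {H : Type*} [NormedAddCommGroup H] [InnerProductSpace ℝ H] [CompleteSpace H]
    (S : ℝ → H →L[ℝ] H)
    (hS0 : S 0 = ContinuousLinearMap.id ℝ H)
    (hSadd : ∀ t s : ℝ, S (t + s) = (S t) ∘L (S s))
    (hSiso : ∀ (t : ℝ) (x : H), ‖S t x‖ = ‖x‖)
    (hScont : ∀ η : H, Continuous fun t : ℝ => S t η)
    (JA : Z →L[ℝ] Z)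
    (C : Z →L[ℝ] H)
    (HA : Z → ℝ)
    (L : NNReal) (hLip : LipschitzWith L (gradient HA)) :
    ∀ z₀ : Z, ∀ η₀ : H,
      ∃! p : (ℝ → Z) × (ℝ → H),
        ContDiff ℝ 1 p.1 ∧ Continuous p.2 ∧ p.1 0 = z₀ ∧ p.2 0 = η₀ ∧
        ∀ t : ℝ,
          deriv p.1 t = JA (gradient HA (p.1 t) + ContinuousLinearMap.adjoint C (p.2 t)) ∧
          p.2 t = S t (η₀ + C z₀) - C (p.1 t)
            + ∫ s in (0 : ℝ)..t, S (t - s) (C (deriv p.1 s)) := by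
  intro z₀ η₀
  obtain ⟨x, ⟨hx0, hx⟩, hx_unique⟩ := exists_unique_hasDerivAt_of_lipschitzWith
    (fun p => continuous_interactionField_apply hSiso hScont hLip continuous_const)
    (lipschitzWith_interactionField hSiso hLip) (fun t => (norm_interactionField_zero hSiso t).le)
    (z₀, η₀ + C z₀)
  refine ⟨fromInteraction S C x,
    isMildSolution_fromInteraction hS0 hSadd hSiso hScont hLip hx0 hx, fun p hp => ?_⟩
  obtain ⟨x', hx'0, hx', rfl⟩ :=
    exists_hasDerivAt_interactionField_of_isMildSolution hSadd hSiso hScont hp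
  rw [hx_unique x' ⟨hx'0, hx'⟩]

/-- Let `Z` be a finite-dimensional real inner product space, `H` a
real Hilbert space, `(S_t)_{t∈ℝ}` a strongly continuous group of unitary operators on
`H`, `J_A : Z → Z` skew-adjoint, `C : Z → H` bounded linear, and `H_A : Z → ℝ`
continuously differentiable with globally Lipschitz gradient.  Then for every
`(z₀, η₀) ∈ Z × H` there is a unique pair `(z, η)` with `z ∈ C¹(ℝ; Z)`,
`η ∈ C(ℝ; H)`, `z(0) = z₀`, `η(0) = η₀`, and for all `t`:
`z'(t) = J_A(∇H_A(z(t)) + C*(η(t)))` and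
`η(t) = S_t(η₀ + C z₀) − C z(t) + ∫₀ᵗ S_{t−s}(C z'(s)) ds`. -/
theorem microscopic_system_wellposed
    {Z : Type*} [NormedAddCommGroup Z] [InnerProductSpace ℝ Z] [FiniteDimensional ℝ Z]
    {H : Type*} [NormedAddCommGroup H] [InnerProductSpace ℝ H] [CompleteSpace H]
    (S : ℝ → H →L[ℝ] H)
    (hS0 : S 0 = ContinuousLinearMap.id ℝ H)
    (hSadd : ∀ t s : ℝ, S (t + s) = (S t) ∘L (S s))
    (hSiso : ∀ (t : ℝ) (x : H), ‖S t x‖ = ‖x‖)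
    (hSsurj : ∀ t : ℝ, Function.Surjective (S t))
    (hScont : ∀ η : H, Continuous fun t : ℝ => S t η)
    (JA : Z →L[ℝ] Z) (hJA : ContinuousLinearMap.adjoint JA = -JA)
    (C : Z →L[ℝ] H)
    (HA : Z → ℝ) (hHA : ContDiff ℝ 1 HA)
    (L : NNReal) (hLip : LipschitzWith L (gradient HA)) :
    ∀ z₀ : Z, ∀ η₀ : H,
      ∃! p : (ℝ → Z) × (ℝ → H),
        ContDiff ℝ 1 p.1 ∧ Continuous p.2 ∧ p.1 0 = z₀ ∧ p.2 0 = η₀ ∧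
        ∀ t : ℝ,
          deriv p.1 t = JA (gradient HA (p.1 t) + ContinuousLinearMap.adjoint C (p.2 t)) ∧
          p.2 t = S t (η₀ + C z₀) - C (p.1 t)
            + ∫ s in (0 : ℝ)..t, S (t - s) (C (deriv p.1 s)) :=
  microscopic_system_wellposed_general S hS0 hSadd hSiso hScont JA C HA L hLip
end

section
/- Let w₀ ∈ W and z₀ ∈ Z, and suppose z : ℝ → Z is continuously differentiable and η : ℝ → H is continuous with z(0) = z₀ and, for all t ∈ ℝ, z'(t) = J_A(∇H_A(z(t)) + C*(η(t))) and η(t) = S_t(w₀ + C z₀) − C z(t) + ∫₀ᵗ S_{t−s}(C z'(s)) ds. Then w(t) := P(η(t)) is continuously differentiable on [0, ∞), satisfies w(0) = w₀, and for all t ≥ 0 the pair (z, w) solves the closed coarse-grained system z'(t) = J_A(∇H_A(z(t)) + C*(w(t))) and w'(t) = −D(w(t) + C z(t)). -/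
/-!
Since `C` takes values in `W`, the adjoint `C*` only sees the `W`-component of `η`, so the
`z`-equation holds with `w = P η` in place of `η`. Projecting the integral equation for `η` onto
`W`, the compression property turns each `S_{t-s}` into `e^{-(t-s)D} = e^{-tD} e^{sD}`, so for
`t ≥ 0` the function `w + C z` is the variation-of-constants formula
`e^{-tD} (w₀ + C z₀ + ∫₀ᵗ e^{sD} C z'(s) ds)`, which solves `u' = -D u + C z'`.
Subtracting `C z` gives `w' = -D (w + C z)`.
-/

open RealInnerProductSpace

/-- Helper instance: the ring of continuous endomorphisms of a submodule of an inner
product space, with its operator-norm topology, is a topological ring.  (This instance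
exists in Mathlib but is not found by instance search at reducible transparency.) -/
noncomputable instance topologicalRing_clm_submodule''
    {H : Type*} [NormedAddCommGroup H] [InnerProductSpace ℝ H]
    (W : Submodule ℝ H) : IsTopologicalRing (↥W →L[ℝ] ↥W) := by
  exact @NonUnitalSeminormedRing.toIsTopologicalRing (↥W →L[ℝ] ↥W) inferInstance

open NormedSpace (exp)

section VariationOfConstants

variable {E : Type*} [NormedAddCommGroup E] [NormedSpace ℝ E] [CompleteSpace E]

theorem ContinuousLinearMap.exp_add_smul (A : E →L[ℝ] E) (s t : ℝ) :
    exp ((s + t) • A) = exp (s • A) * exp (t • A) := by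
  let +nondep : NormedAlgebra ℚ (E →L[ℝ] E) := .restrictScalars ℚ ℝ _
  rw [add_smul]
  exact NormedSpace.exp_add_of_commute (((Commute.refl A).smul_left s).smul_right t)

noncomputable def variationOfConstants (A : E →L[ℝ] E) (v : E) (g : ℝ → E) (t : ℝ) : E :=
  exp ((-t) • A) (v + ∫ s in (0 : ℝ)..t, exp (s • A) (g s))

theorem hasDerivAt_variationOfConstants (A : E →L[ℝ] E) (v : E) {g : ℝ → E}
    (hg : Continuous g) (t : ℝ) :
    HasDerivAt (variationOfConstants A v g) (-A (variationOfConstants A v g t) + g t) t := by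
  have hexp : HasDerivAt (fun u : ℝ => exp ((-u) • A)) (-A * exp ((-t) • A)) t := by
    simpa only [neg_smul, smul_neg] using hasDerivAt_exp_smul_const' (-A) t
  have hint : HasDerivAt (fun u => ∫ s in (0 : ℝ)..u, exp (s • A) (g s)) (exp (t • A) (g t)) t :=
    (((differentiable_exp_smul_const ℝ A).continuous.clm_apply hg).integral_hasStrictDerivAt
      0 t).hasDerivAt
  have hcancel : exp ((-t) • A) (exp (t • A) (g t)) = g t := by
    rw [← mul_apply_eq_comp, ← A.exp_add_smul, neg_add_cancel, zero_smul, NormedSpace.exp_zero]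
    rfl
  exact (hexp.clm_apply ((hasDerivAt_const t v).add hint)).congr_deriv
    (by rw [zero_add, hcancel]; rfl)

end VariationOfConstants

theorem continuous_apply_of_norm_apply_le {X R E F : Type*} [TopologicalSpace X] [Semiring R]
    [SeminormedAddCommGroup E] [SeminormedAddCommGroup F] [Module R E] [Module R F]
    {S : X → E →L[R] F} (hS : ∀ t x, ‖S t x‖ ≤ ‖x‖) (hScont : ∀ x, Continuous fun t => S t x)
    {φ : X → E} (hφ : Continuous φ) : Continuous fun t => S t (φ t) := by
  refine continuous_iff_continuousAt.2 fun t₀ => ?_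
  rw [ContinuousAt, tendsto_iff_norm_sub_tendsto_zero]
  have hle : ∀ t, ‖S t (φ t) - S t₀ (φ t₀)‖ ≤ ‖φ t - φ t₀‖ + ‖S t (φ t₀) - S t₀ (φ t₀)‖ :=
    fun t => calc
      _ = ‖S t (φ t - φ t₀) + (S t (φ t₀) - S t₀ (φ t₀))‖ := by rw [map_sub]; abel_nf
      _ ≤ _ := (norm_add_le _ _).trans (add_le_add_left (hS t _) _)
  refine squeeze_zero (fun _ => norm_nonneg _) hle ?_
  simpa using (tendsto_iff_norm_sub_tendsto_zero.1 (hφ.tendsto t₀)).add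
    (tendsto_iff_norm_sub_tendsto_zero.1 ((hScont (φ t₀)).tendsto t₀))

theorem ContinuousLinearMap.adjoint_apply_orthogonalProjectionOnto {𝕜 Z H : Type*} [RCLike 𝕜]
    [NormedAddCommGroup Z] [InnerProductSpace 𝕜 Z] [CompleteSpace Z]
    [NormedAddCommGroup H] [InnerProductSpace 𝕜 H] [CompleteSpace H]
    (C : Z →L[𝕜] H) (W : Submodule 𝕜 H) [W.HasOrthogonalProjection] (hC : ∀ z, C z ∈ W)
    (x : H) : adjoint C (W.orthogonalProjectionOnto x : H) = adjoint C x := by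
  refine ext_inner_right 𝕜 fun ζ => ?_
  rw [adjoint_inner_left, adjoint_inner_left]
  exact W.inner_orthogonalProjectionOnto_eq_of_mem_right ⟨C ζ, hC ζ⟩ x

section Compression

variable {H : Type*} [NormedAddCommGroup H] [InnerProductSpace ℝ H] [CompleteSpace H]
  {S : ℝ → H →L[ℝ] H} {W : Submodule ℝ H} [CompleteSpace W] {D : W →L[ℝ] W}

theorem orthogonalProjectionOnto_integral_eq (hS : ∀ t x, ‖S t x‖ ≤ ‖x‖)
    (hScont : ∀ x, Continuous fun t => S t x)
    (hcomp : ∀ t : ℝ, 0 ≤ t → ∀ v : W,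
      W.orthogonalProjectionOnto (S t (v : H)) = exp ((-t) • D) v)
    {φ : ℝ → W} (hφ : Continuous φ) {t : ℝ} (ht : 0 ≤ t) :
    W.orthogonalProjectionOnto (∫ s in (0 : ℝ)..t, S (t - s) (φ s)) =
      exp ((-t) • D) (∫ s in (0 : ℝ)..t, exp (s • D) (φ s)) := by
  have hint : IntervalIntegrable (fun s => S (t - s) (φ s)) MeasureTheory.volume 0 t :=
    (continuous_apply_of_norm_apply_le (fun s => hS (t - s))
      (fun x => (hScont x).comp (continuous_sub_left t))
      (continuous_subtype_val.comp hφ)).intervalIntegrable 0 t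
  have hint' : IntervalIntegrable (fun s => exp (s • D) (φ s)) MeasureTheory.volume 0 t :=
    ((differentiable_exp_smul_const ℝ D).continuous.clm_apply hφ).intervalIntegrable 0 t
  rw [← ContinuousLinearMap.intervalIntegral_comp_comm _ hint,
    ← ContinuousLinearMap.intervalIntegral_comp_comm _ hint']
  refine intervalIntegral.integral_congr fun s hs => ?_
  rw [Set.uIcc_of_le ht] at hs
  rw [hcomp _ (sub_nonneg.2 hs.2), ← mul_apply_eq_comp, ← D.exp_add_smul, neg_sub, sub_eq_neg_add]

end Compression

theorem coarse_grained_closed_system_general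
    {Z : Type*} [NormedAddCommGroup Z] [InnerProductSpace ℝ Z] [FiniteDimensional ℝ Z]
    {H : Type*} [NormedAddCommGroup H] [InnerProductSpace ℝ H] [CompleteSpace H]
    (S : ℝ → H →L[ℝ] H)
    (hS0 : S 0 = ContinuousLinearMap.id ℝ H)
    (hSiso : ∀ (t : ℝ) (x : H), ‖S t x‖ = ‖x‖)
    (hScont : ∀ η : H, Continuous fun t : ℝ => S t η)
    (JA : Z →L[ℝ] Z)
    (C : Z →L[ℝ] H)
    (HA : Z → ℝ)
    (L : NNReal)
    (W : Submodule ℝ H) [FiniteDimensional ℝ W]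
    (hCrange : ∀ z : Z, C z ∈ W)
    (D : W →L[ℝ] W)
    (hcomp : ∀ t : ℝ, 0 ≤ t → ∀ v : W,
      W.orthogonalProjectionOnto (S t (v : H)) = NormedSpace.exp ((-t) • D) v)
    (z₀ : Z) (w₀ : W)
    (z : ℝ → Z) (η : ℝ → H)
    (hz : ContDiff ℝ 1 z) (hz0 : z 0 = z₀)
    (hzeq : ∀ t : ℝ,
      deriv z t = JA (gradient HA (z t) + ContinuousLinearMap.adjoint C (η t)))
    (hηeq : ∀ t : ℝ,
      η t = S t ((w₀ : H) + C z₀) - C (z t)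
        + ∫ s in (0 : ℝ)..t, S (t - s) (C (deriv z s))) :
    W.orthogonalProjectionOnto (η 0) = w₀ ∧
    ContDiffOn ℝ 1 (fun t : ℝ => W.orthogonalProjectionOnto (η t)) (Set.Ici 0) ∧
    ∀ t : ℝ, 0 ≤ t →
      deriv z t = JA (gradient HA (z t)
        + ContinuousLinearMap.adjoint C ((W.orthogonalProjectionOnto (η t) : H))) ∧
      HasDerivWithinAt (fun s : ℝ => W.orthogonalProjectionOnto (η s))
        (-(D (W.orthogonalProjectionOnto (η t) + ⟨C (z t), hCrange (z t)⟩)))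
        (Set.Ici 0) t := by
  set Cw : Z →L[ℝ] W := C.codRestrict W hCrange
  have hCw : ∀ x, (Cw x : H) = C x := fun _ => rfl
  have hz' : Continuous fun s => Cw (deriv z s) :=
    Cw.continuous.comp (hz.continuous_deriv le_rfl)
  set F : ℝ → W := fun t =>
    variationOfConstants D (w₀ + Cw z₀) (fun s => Cw (deriv z s)) t - Cw (z t)
  have hPη : ∀ t ∈ Set.Ici (0 : ℝ), W.orthogonalProjectionOnto (η t) = F t := by
    intro t ht
    have hint :=
      orthogonalProjectionOnto_integral_eq (fun t x => (hSiso t x).le) hScont hcomp hz' ht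
    have hinit := hcomp t ht (w₀ + Cw z₀)
    simp only [Submodule.coe_add, hCw] at hint hinit
    have hCz : W.orthogonalProjectionOnto (C (z t)) = Cw (z t) :=
      W.orthogonalProjectionOnto_mem_subspace_eq_self (Cw (z t))
    rw [hηeq t, map_add, map_sub, hint, hinit, hCz]
    simp only [F, variationOfConstants, map_add]
    abel
  have hF : ∀ t, HasDerivAt F (-D (F t + Cw (z t))) t := fun t => by
    have h := (hasDerivAt_variationOfConstants D (w₀ + Cw z₀) hz' t).sub
      (Cw.hasFDerivAt.comp_hasDerivAt t ((hz.differentiable one_ne_zero) t).hasDerivAt)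
    rw [add_sub_cancel_right] at h
    exact h.congr_deriv (by simp [F])
  have hFd : Differentiable ℝ F := fun t => (hF t).differentiableAt
  have hFC : ContDiff ℝ 1 F := by
    refine contDiff_one_iff_deriv.2 ⟨hFd, ?_⟩
    rw [funext fun t => (hF t).deriv]
    exact (D.continuous.comp (hFd.continuous.add (Cw.continuous.comp hz.continuous))).neg
  refine ⟨?_, hFC.contDiffOn.congr hPη, fun t ht => ⟨?_, ?_⟩⟩
  · rw [hηeq 0, hS0, hz0]
    simp
  · rw [hzeq t, C.adjoint_apply_orthogonalProjectionOnto W hCrange]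
  · rw [hPη t ht]
    exact (hF t).hasDerivWithinAt.congr hPη (hPη t ht)

/-- In the setting of the coupled microscopic system, let `W ⊆ H`
be a finite-dimensional subspace containing the range of `C`, `P` the orthogonal
projection onto `W`, and `D : W → W` a linear map with the compression property
`P(S_t v) = e^{−tD} v` for `t ≥ 0`, `v ∈ W`.  If `(z, η)` solves the microscopic
system with initial heat-bath state `w₀ ∈ W`, then `w(t) := P(η(t))` is continuously
differentiable on `[0, ∞)`, `w(0) = w₀`, and for all `t ≥ 0` the pair `(z, w)`
solves the closed coarse-grained system
`z'(t) = J_A(∇H_A(z(t)) + C*(w(t)))`, `w'(t) = −D(w(t) + C z(t))`. -/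
theorem coarse_grained_closed_system
    {Z : Type*} [NormedAddCommGroup Z] [InnerProductSpace ℝ Z] [FiniteDimensional ℝ Z]
    {H : Type*} [NormedAddCommGroup H] [InnerProductSpace ℝ H] [CompleteSpace H]
    (S : ℝ → H →L[ℝ] H)
    (hS0 : S 0 = ContinuousLinearMap.id ℝ H)
    (hSadd : ∀ t s : ℝ, S (t + s) = (S t) ∘L (S s))
    (hSiso : ∀ (t : ℝ) (x : H), ‖S t x‖ = ‖x‖)
    (hSsurj : ∀ t : ℝ, Function.Surjective (S t))
    (hScont : ∀ η : H, Continuous fun t : ℝ => S t η)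
    (JA : Z →L[ℝ] Z) (hJA : ContinuousLinearMap.adjoint JA = -JA)
    (C : Z →L[ℝ] H)
    (HA : Z → ℝ) (hHA : ContDiff ℝ 1 HA)
    (L : NNReal) (hLip : LipschitzWith L (gradient HA))
    (W : Submodule ℝ H) [FiniteDimensional ℝ W]
    (hCrange : ∀ z : Z, C z ∈ W)
    (D : W →L[ℝ] W)
    (hcomp : ∀ t : ℝ, 0 ≤ t → ∀ v : W,
      W.orthogonalProjectionOnto (S t (v : H)) = NormedSpace.exp ((-t) • D) v)
    (z₀ : Z) (w₀ : W)
    (z : ℝ → Z) (η : ℝ → H)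
    (hz : ContDiff ℝ 1 z) (hη : Continuous η) (hz0 : z 0 = z₀)
    (hzeq : ∀ t : ℝ,
      deriv z t = JA (gradient HA (z t) + ContinuousLinearMap.adjoint C (η t)))
    (hηeq : ∀ t : ℝ,
      η t = S t ((w₀ : H) + C z₀) - C (z t)
        + ∫ s in (0 : ℝ)..t, S (t - s) (C (deriv z s))) :
    W.orthogonalProjectionOnto (η 0) = w₀ ∧
    ContDiffOn ℝ 1 (fun t : ℝ => W.orthogonalProjectionOnto (η t)) (Set.Ici 0) ∧
    ∀ t : ℝ, 0 ≤ t →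
      deriv z t = JA (gradient HA (z t)
        + ContinuousLinearMap.adjoint C ((W.orthogonalProjectionOnto (η t) : H))) ∧
      HasDerivWithinAt (fun s : ℝ => W.orthogonalProjectionOnto (η s))
        (-(D (W.orthogonalProjectionOnto (η t) + ⟨C (z t), hCrange (z t)⟩)))
        (Set.Ici 0) t :=
  coarse_grained_closed_system_general S hS0 hSiso hScont JA C HA L W hCrange D hcomp z₀ w₀ z η hz
    hz0 hzeq hηeq
end

section
/- For every (z, w, e) ∈ Y: the gradient of E_GEN at (z, w, e) equals (∇H_A(z) + C*w, w + Cz, 1), the gradient of S_GEN at (z, w, e) equals (0, 0, β), and J_GEN(z)(∇E_GEN(z,w,e)) + K_GEN(z,w)(∇S_GEN(z,w,e)) = (J_A(z)(∇H_A(z) + C*w), −D(w + Cz), ⟨D(w + Cz), w + Cz⟩); hence the coarse-grained equations ż = J_A(z)(∇H_A(z) + C*w), ẇ = −D(w + Cz), ė = ⟨D(w + Cz), w + Cz⟩ have the GENERIC form ẏ = J_GEN(y)∇E_GEN(y) + K_GEN(y)∇S_GEN(y). -/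
open RealInnerProductSpace

/-!
The two gradients are the chain rule applied term by term. In the vector field, the factor `β⁻¹`
cancels the `β` of `∇S_GEN`, `D_skw + D_sym = D` recombines the `w`-component, and the skew part of
`D` does not contribute to the quadratic form, so `⟪D_sym x, x⟫ = ⟪D x, x⟫`.
-/

section InnerTriple

variable {Z W : Type*} [NormedAddCommGroup Z] [InnerProductSpace ℝ Z]
  [NormedAddCommGroup W] [InnerProductSpace ℝ W]

/-- The functional `⟪(a, b, c), ·⟫` of the product inner product; `Z × W × ℝ` itself carries the
sup norm, so gradients on it are expressed through this functional. -/
noncomputable def innerTripleCLM (a : Z) (b : W) (c : ℝ) : Z × W × ℝ →L[ℝ] ℝ :=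
  (innerSL ℝ a).comp (ContinuousLinearMap.fst ℝ Z (W × ℝ))
    + (innerSL ℝ b).comp
        ((ContinuousLinearMap.fst ℝ W ℝ).comp (ContinuousLinearMap.snd ℝ Z (W × ℝ)))
    + c • (ContinuousLinearMap.snd ℝ W ℝ).comp (ContinuousLinearMap.snd ℝ Z (W × ℝ))

@[simp]
theorem innerTripleCLM_apply (a : Z) (b : W) (c : ℝ) (v : Z × W × ℝ) :
    innerTripleCLM a b c v = ⟪a, v.1⟫ + ⟪b, v.2.1⟫ + c * v.2.2 := by
  simp [innerTripleCLM]

theorem hasFDerivAt_const_mul_snd_snd (β : ℝ) (p : Z × W × ℝ) :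
    HasFDerivAt (fun q : Z × W × ℝ => β * q.2.2) (innerTripleCLM (0 : Z) (0 : W) β) p := by
  convert (innerTripleCLM (0 : Z) (0 : W) β).hasFDerivAt using 1
  funext q
  simp

variable [CompleteSpace Z] [CompleteSpace W]

theorem hasFDerivAt_energy (C : Z →L[ℝ] W) {HA : Z → ℝ} {z : Z}
    (hHA : DifferentiableAt ℝ HA z) (w : W) (e : ℝ) :
    HasFDerivAt (fun p : Z × W × ℝ => HA p.1 + ⟪C p.1, p.2.1⟫ + (1 / 2) * ‖p.2.1‖ ^ 2 + p.2.2)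
      (innerTripleCLM (gradient HA z + ContinuousLinearMap.adjoint C w) (w + C z) 1)
      (z, w, e) := by
  have hW : HasFDerivAt (fun p : Z × W × ℝ => p.2.1) _ (z, w, e) :=
    (hasFDerivAt_snd (𝕜 := ℝ)).fst
  have hHA' := hHA.hasGradientAt.hasFDerivAt.comp (z, w, e) (hasFDerivAt_fst (𝕜 := ℝ))
  have hcoupling :=
    ((C.hasFDerivAt (x := z)).comp (z, w, e) (hasFDerivAt_fst (𝕜 := ℝ))).inner ℝ hW
  have hkinetic := hW.norm_sq.const_mul (1 / 2 : ℝ)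
  refine (((hHA'.add hcoupling).add hkinetic).add (hasFDerivAt_snd (𝕜 := ℝ)).snd).congr_fderiv ?_
  refine ContinuousLinearMap.ext fun v => ?_
  simp only [innerTripleCLM_apply, inner_add_left, ContinuousLinearMap.adjoint_inner_left,
    inner_gradient_left, add_apply, smul_apply, ContinuousLinearMap.comp_apply,
    ContinuousLinearMap.prod_apply, ContinuousLinearMap.coe_fst', ContinuousLinearMap.coe_snd',
    Function.comp_apply, toDual_gradient, fderivInnerCLM_apply, coe_innerSL_apply, smul_eq_mul,
    nsmul_eq_mul, real_inner_comm w]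
  ring

end InnerTriple

theorem half_smul_sub_add_half_smul_add {M : Type*} [AddCommGroup M] [Module ℝ M] (a b : M) :
    ((1 : ℝ) / 2) • (a - b) + ((1 : ℝ) / 2) • (a + b) = a := by
  module

theorem inner_symmPart_apply_self {W : Type*} [NormedAddCommGroup W] [InnerProductSpace ℝ W]
    [CompleteSpace W] (D : W →L[ℝ] W) (x : W) :
    ⟪(((1 : ℝ) / 2) • (D + ContinuousLinearMap.adjoint D)) x, x⟫ = ⟪D x, x⟫ := by
  simp only [smul_apply, add_apply, real_inner_smul_left,
    inner_add_left, ContinuousLinearMap.adjoint_inner_left, real_inner_comm x (D x)]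
  ring

theorem generic_vectorField_eq {Z W : Type*} [AddCommGroup Z] [Module ℝ Z]
    [NormedAddCommGroup W] [InnerProductSpace ℝ W] [CompleteSpace W]
    {β : ℝ} (hβ : β ≠ 0) (D : W →L[ℝ] W) (v : Z) (x : W) :
    let Dsym : W →L[ℝ] W := ((1 : ℝ) / 2) • (D + ContinuousLinearMap.adjoint D)
    let Dskw : W →L[ℝ] W := ((1 : ℝ) / 2) • (D - ContinuousLinearMap.adjoint D)
    (v, -(Dskw x), (0 : ℝ))
      + β⁻¹ • ((0 : Z), Dsym (0 : W) - β • Dsym x, -⟪Dsym x, (0 : W)⟫ + β * ⟪Dsym x, x⟫)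
      = (v, -(D x), ⟪D x, x⟫) := by
  intro Dsym Dskw
  have hD : Dskw x + Dsym x = D x := by
    simpa only [Dskw, Dsym, smul_apply, add_apply, sub_apply] using
      half_smul_sub_add_half_smul_add (D x) (D.adjoint x)
  ext
  · simp
  · simp only [Prod.snd_add, Prod.fst_add, Prod.smul_snd, Prod.smul_fst, map_zero, zero_sub,
      smul_neg, smul_smul, inv_mul_cancel₀ hβ, one_smul, ← hD]
    abel
  · simp only [Prod.snd_add, Prod.smul_snd, smul_eq_mul, inner_zero_right, neg_zero, zero_add,
      ← mul_assoc, inv_mul_cancel₀ hβ, one_mul]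
    exact inner_symmPart_apply_self D x

theorem generic_form_of_coarse_grained_equations_general
    {Z : Type*} [NormedAddCommGroup Z] [InnerProductSpace ℝ Z] [FiniteDimensional ℝ Z]
    {W : Type*} [NormedAddCommGroup W] [InnerProductSpace ℝ W] [FiniteDimensional ℝ W]
    (β : ℝ) (hβ : 0 < β)
    (C : Z →L[ℝ] W)
    (HA : Z → ℝ) (hHA : ContDiff ℝ 1 HA)
    (D : W →L[ℝ] W)
    (JA : Z → Z →L[ℝ] Z) :
    ∀ (z : Z) (w : W) (e : ℝ),
      -- the symmetric and skew-symmetric parts of D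
      let Dsym : W →L[ℝ] W := ((1 : ℝ) / 2) • (D + ContinuousLinearMap.adjoint D)
      let Dskw : W →L[ℝ] W := ((1 : ℝ) / 2) • (D - ContinuousLinearMap.adjoint D)
      -- (1) the gradient of E_GEN at (z, w, e) is (∇H_A(z) + C*w, w + Cz, 1)
      (∃ L' : Z × W × ℝ →L[ℝ] ℝ,
        (∀ v : Z × W × ℝ,
          L' v = ⟪gradient HA z + ContinuousLinearMap.adjoint C w, v.1⟫
            + ⟪w + C z, v.2.1⟫ + v.2.2) ∧
        HasFDerivAt (fun p : Z × W × ℝ =>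
          HA p.1 + ⟪C p.1, p.2.1⟫ + (1 / 2) * ‖p.2.1‖ ^ 2 + p.2.2) L' (z, w, e)) ∧
      -- (2) the gradient of S_GEN at (z, w, e) is (0, 0, β)
      (∃ L' : Z × W × ℝ →L[ℝ] ℝ,
        (∀ v : Z × W × ℝ,
          L' v = ⟪(0 : Z), v.1⟫ + ⟪(0 : W), v.2.1⟫ + β * v.2.2) ∧
        HasFDerivAt (fun p : Z × W × ℝ => β * p.2.2) L' (z, w, e)) ∧
      -- (3) J_GEN(z)(∇E_GEN) + K_GEN(z,w)(∇S_GEN) equals the coarse-grained vector field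
      ((JA z (gradient HA z + ContinuousLinearMap.adjoint C w),
          -(Dskw (w + C z)), (0 : ℝ))
        + β⁻¹ • ((0 : Z),
            Dsym (0 : W) - β • Dsym (w + C z),
            -⟪Dsym (w + C z), (0 : W)⟫ + β * ⟪Dsym (w + C z), w + C z⟫)
        = (JA z (gradient HA z + ContinuousLinearMap.adjoint C w),
            -(D (w + C z)), ⟪D (w + C z), w + C z⟫)) := by
  intro z w e Dsym Dskw
  refine ⟨⟨_, fun v => by simp, hasFDerivAt_energy C (hHA.differentiable one_ne_zero z) w e⟩,
    ⟨_, fun v => by simp, hasFDerivAt_const_mul_snd_snd β (z, w, e)⟩,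
    generic_vectorField_eq hβ.ne' D _ (w + C z)⟩

/-- In the GENERIC setting on `Y = Z × W × ℝ` with energy
`E_GEN(z,w,e) = H_A(z) + ⟨Cz, w⟩ + ½‖w‖² + e` and entropy `S_GEN(z,w,e) = β·e`:
the gradient of `E_GEN` at `(z,w,e)` is `(∇H_A(z) + C*w, w + Cz, 1)`, the gradient of
`S_GEN` is `(0, 0, β)`, and
`J_GEN(z)(∇E_GEN) + K_GEN(z,w)(∇S_GEN) = (J_A(z)(∇H_A(z) + C*w), −D(w + Cz), ⟨D(w + Cz), w + Cz⟩)`;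
hence the coarse-grained equations have the GENERIC form
`ẏ = J_GEN(y)∇E_GEN(y) + K_GEN(y)∇S_GEN(y)`. -/
theorem generic_form_of_coarse_grained_equations
    {Z : Type*} [NormedAddCommGroup Z] [InnerProductSpace ℝ Z] [FiniteDimensional ℝ Z]
    {W : Type*} [NormedAddCommGroup W] [InnerProductSpace ℝ W] [FiniteDimensional ℝ W]
    (β : ℝ) (hβ : 0 < β)
    (C : Z →L[ℝ] W)
    (HA : Z → ℝ) (hHA : ContDiff ℝ 1 HA)
    (D : W →L[ℝ] W)
    (JA : Z → Z →L[ℝ] Z)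
    (hJA : ∀ z : Z, ContinuousLinearMap.adjoint (JA z) = -(JA z)) :
    ∀ (z : Z) (w : W) (e : ℝ),
      -- the symmetric and skew-symmetric parts of D
      let Dsym : W →L[ℝ] W := ((1 : ℝ) / 2) • (D + ContinuousLinearMap.adjoint D)
      let Dskw : W →L[ℝ] W := ((1 : ℝ) / 2) • (D - ContinuousLinearMap.adjoint D)
      -- (1) the gradient of E_GEN at (z, w, e) is (∇H_A(z) + C*w, w + Cz, 1)
      (∃ L' : Z × W × ℝ →L[ℝ] ℝ,
        (∀ v : Z × W × ℝ,
          L' v = ⟪gradient HA z + ContinuousLinearMap.adjoint C w, v.1⟫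
            + ⟪w + C z, v.2.1⟫ + v.2.2) ∧
        HasFDerivAt (fun p : Z × W × ℝ =>
          HA p.1 + ⟪C p.1, p.2.1⟫ + (1 / 2) * ‖p.2.1‖ ^ 2 + p.2.2) L' (z, w, e)) ∧
      -- (2) the gradient of S_GEN at (z, w, e) is (0, 0, β)
      (∃ L' : Z × W × ℝ →L[ℝ] ℝ,
        (∀ v : Z × W × ℝ,
          L' v = ⟪(0 : Z), v.1⟫ + ⟪(0 : W), v.2.1⟫ + β * v.2.2) ∧
        HasFDerivAt (fun p : Z × W × ℝ => β * p.2.2) L' (z, w, e)) ∧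
      -- (3) J_GEN(z)(∇E_GEN) + K_GEN(z,w)(∇S_GEN) equals the coarse-grained vector field
      ((JA z (gradient HA z + ContinuousLinearMap.adjoint C w),
          -(Dskw (w + C z)), (0 : ℝ))
        + β⁻¹ • ((0 : Z),
            Dsym (0 : W) - β • Dsym (w + C z),
            -⟪Dsym (w + C z), (0 : W)⟫ + β * ⟪Dsym (w + C z), w + C z⟫)
        = (JA z (gradient HA z + ContinuousLinearMap.adjoint C w),
            -(D (w + C z)), ⟪D (w + C z), w + C z⟫)) :=
  generic_form_of_coarse_grained_equations_general β hβ C HA hHA D JA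
end

section
/- Let I ⊆ ℝ be an interval and let z : I → Z and w : I → W be differentiable maps satisfying z'(t) = J_A(z(t))(∇H_A(z(t)) + C*(w(t))) and w'(t) = −D(w(t) + C z(t)) for all t ∈ I. Then for all t ∈ I, the function t ↦ H_A(z(t)) + ⟨C z(t), w(t)⟩ + (1/2)‖w(t)‖² is differentiable with derivative −⟨D(w(t) + C z(t)), w(t) + C z(t)⟩. -/
open RealInnerProductSpace

/-! The energy `H_A(z) + ⟨C z, w⟩ + ½‖w‖²` has partial gradients `∇H_A(z) + C*w` in `z` and
`w + C z` in `w`. Along the flow `z' = J_A(z) v` with `v` the first of them, and its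
contribution `⟨v, J_A(z) v⟩` vanishes since `J_A(z)` is skew-adjoint; the second contributes
`⟨w + C z, -D(w + C z)⟩`. -/

theorem ContinuousLinearMap.inner_apply_self_eq_zero_of_adjoint_eq_neg
    {E : Type*} [NormedAddCommGroup E] [InnerProductSpace ℝ E] [CompleteSpace E]
    {A : E →L[ℝ] E} (hA : adjoint A = -A) (v : E) : ⟪v, A v⟫ = 0 := by
  have h := A.adjoint_inner_left v v
  rw [hA, neg_apply, inner_neg_left, real_inner_comm] at h
  linarith

theorem HasGradientAt.comp_hasDerivWithinAt
    {E : Type*} [NormedAddCommGroup E] [InnerProductSpace ℝ E] [CompleteSpace E]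
    {f : E → ℝ} {g : E} {γ : ℝ → E} {γ' : E} {s : Set ℝ} {t : ℝ}
    (hf : HasGradientAt f g (γ t)) (hγ : HasDerivWithinAt γ γ' s t) :
    HasDerivWithinAt (fun u => f (γ u)) ⟪g, γ'⟫ s t :=
  hf.hasFDerivAt.comp_hasDerivWithinAt t hγ

section CoupledEnergy

variable {Z : Type*} [NormedAddCommGroup Z] [InnerProductSpace ℝ Z] [CompleteSpace Z]
  {W : Type*} [NormedAddCommGroup W] [InnerProductSpace ℝ W] [CompleteSpace W]

theorem hasDerivWithinAt_coupled_energy (C : Z →L[ℝ] W) {H : Z → ℝ} {z : ℝ → Z} {w : ℝ → W}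
    {g z' : Z} {w' : W} {s : Set ℝ} {t : ℝ} (hH : HasGradientAt H g (z t))
    (hz : HasDerivWithinAt z z' s t) (hw : HasDerivWithinAt w w' s t) :
    HasDerivWithinAt (fun u => H (z u) + ⟪C (z u), w u⟫ + (1 / 2) * ‖w u‖ ^ 2)
      (⟪g + ContinuousLinearMap.adjoint C (w t), z'⟫ + ⟪w t + C (z t), w'⟫) s t := by
  have hCz : HasDerivWithinAt (fun u => C (z u)) (C z') s t :=
    C.hasFDerivAt.comp_hasDerivWithinAt t hz
  refine (((hH.comp_hasDerivWithinAt hz).add (hCz.inner ℝ hw)).add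
    (hw.norm_sq.const_mul (1 / 2))).congr_deriv ?_
  rw [inner_add_left, inner_add_left, ContinuousLinearMap.adjoint_inner_left,
    real_inner_comm (C z')]
  ring

end CoupledEnergy

theorem energy_dissipation_along_coarse_grained_flow_general
    {Z : Type*} [NormedAddCommGroup Z] [InnerProductSpace ℝ Z] [FiniteDimensional ℝ Z]
    {W : Type*} [NormedAddCommGroup W] [InnerProductSpace ℝ W] [FiniteDimensional ℝ W]
    (C : Z →L[ℝ] W)
    (HA : Z → ℝ) (hHA : ContDiff ℝ 1 HA)
    (D : W →L[ℝ] W)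
    (JA : Z → Z →L[ℝ] Z)
    (hJA : ∀ z : Z, ContinuousLinearMap.adjoint (JA z) = -(JA z))
    (I : Set ℝ)
    (z : ℝ → Z) (w : ℝ → W)
    (hz : ∀ t ∈ I, HasDerivWithinAt z
      (JA (z t) (gradient HA (z t) + ContinuousLinearMap.adjoint C (w t))) I t)
    (hw : ∀ t ∈ I, HasDerivWithinAt w (-(D (w t + C (z t)))) I t) :
    ∀ t ∈ I, HasDerivWithinAt
      (fun t : ℝ => HA (z t) + ⟪C (z t), w t⟫ + (1 / 2) * ‖w t‖ ^ 2)
      (-⟪D (w t + C (z t)), w t + C (z t)⟫) I t := by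
  intro t ht
  have hgrad : HasGradientAt HA (gradient HA (z t)) (z t) :=
    (hHA.differentiable one_ne_zero (z t)).hasGradientAt
  refine (hasDerivWithinAt_coupled_energy C hgrad (hz t ht) (hw t ht)).congr_deriv ?_
  rw [ContinuousLinearMap.inner_apply_self_eq_zero_of_adjoint_eq_neg (hJA _), inner_neg_right,
    real_inner_comm, zero_add]

/-- Let `I ⊆ ℝ` be an interval and `z : I → Z`, `w : I → W`
differentiable with `z'(t) = J_A(z(t))(∇H_A(z(t)) + C*(w(t)))` and
`w'(t) = −D(w(t) + C z(t))` on `I`.  Then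
`t ↦ H_A(z(t)) + ⟨C z(t), w(t)⟩ + ½‖w(t)‖²` is differentiable on `I` with derivative
`−⟨D(w(t) + C z(t)), w(t) + C z(t)⟩`. -/
theorem energy_dissipation_along_coarse_grained_flow
    {Z : Type*} [NormedAddCommGroup Z] [InnerProductSpace ℝ Z] [FiniteDimensional ℝ Z]
    {W : Type*} [NormedAddCommGroup W] [InnerProductSpace ℝ W] [FiniteDimensional ℝ W]
    (C : Z →L[ℝ] W)
    (HA : Z → ℝ) (hHA : ContDiff ℝ 1 HA)
    (D : W →L[ℝ] W)
    (JA : Z → Z →L[ℝ] Z)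
    (hJA : ∀ z : Z, ContinuousLinearMap.adjoint (JA z) = -(JA z))
    (I : Set ℝ) (hI : Set.OrdConnected I)
    (z : ℝ → Z) (w : ℝ → W)
    (hz : ∀ t ∈ I, HasDerivWithinAt z
      (JA (z t) (gradient HA (z t) + ContinuousLinearMap.adjoint C (w t))) I t)
    (hw : ∀ t ∈ I, HasDerivWithinAt w (-(D (w t + C (z t)))) I t) :
    ∀ t ∈ I, HasDerivWithinAt
      (fun t : ℝ => HA (z t) + ⟪C (z t), w t⟫ + (1 / 2) * ‖w t‖ ^ 2)
      (-⟪D (w t + C (z t)), w t + C (z t)⟫) I t :=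
  energy_dissipation_along_coarse_grained_flow_general C HA hHA D JA hJA I z w hz hw
end

section
/- Assume ⟨(D + D*)u, u⟩ ≥ 0 for all u ∈ W. Then for every (z, w) ∈ Z × W the operator K_GEN(z,w) : Y → Y is self-adjoint and positive semidefinite; in fact, for v = (a, b, c) ∈ Y one has ⟨K_GEN(z,w)v, v⟩ = β⁻¹·⟨D_sym(b − c·(w + Cz)), b − c·(w + Cz)⟩ ≥ 0. -/
open RealInnerProductSpace

/-- Assume `⟨(D + D*)u, u⟩ ≥ 0` for all `u ∈ W`.  Then for every
`(z, w)` the Onsager operator `K_GEN(z,w) : Y → Y` (on `Y = Z × W × ℝ`, with the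
product inner product `⟨(a,b,c),(a',b',c')⟩ = ⟨a,a'⟩ + ⟨b,b'⟩ + c·c'`) is
self-adjoint and positive semidefinite; in fact for `v = (a,b,c)` one has
`⟨K_GEN(z,w)v, v⟩ = β⁻¹·⟨D_sym(b − c·(w + Cz)), b − c·(w + Cz)⟩ ≥ 0`. -/
theorem onsager_operator_selfadjoint_psd
    {Z : Type*} [NormedAddCommGroup Z] [InnerProductSpace ℝ Z] [FiniteDimensional ℝ Z]
    {W : Type*} [NormedAddCommGroup W] [InnerProductSpace ℝ W] [FiniteDimensional ℝ W]
    (β : ℝ) (hβ : 0 < β)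
    (C : Z →L[ℝ] W)
    (D : W →L[ℝ] W)
    (hpsd : ∀ u : W, 0 ≤ ⟪(D + ContinuousLinearMap.adjoint D) u, u⟫) :
    ∀ (z : Z) (w : W),
      let Dsym : W →L[ℝ] W := ((1 : ℝ) / 2) • (D + ContinuousLinearMap.adjoint D)
      let K : Z × W × ℝ → Z × W × ℝ := fun v =>
        β⁻¹ • ((0 : Z),
          Dsym v.2.1 - v.2.2 • Dsym (w + C z),
          -⟪Dsym (w + C z), v.2.1⟫ + v.2.2 * ⟪Dsym (w + C z), w + C z⟫)
      -- K is self-adjoint for the product inner product on Z × W × ℝ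
      (∀ u v : Z × W × ℝ,
        ⟪(K u).1, v.1⟫ + ⟪(K u).2.1, v.2.1⟫ + (K u).2.2 * v.2.2
          = ⟪u.1, (K v).1⟫ + ⟪u.2.1, (K v).2.1⟫ + u.2.2 * (K v).2.2) ∧
      -- the quadratic form of K
      (∀ v : Z × W × ℝ,
        ⟪(K v).1, v.1⟫ + ⟪(K v).2.1, v.2.1⟫ + (K v).2.2 * v.2.2
          = β⁻¹ * ⟪Dsym (v.2.1 - v.2.2 • (w + C z)), v.2.1 - v.2.2 • (w + C z)⟫) ∧
      -- positive semidefiniteness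
      (∀ v : Z × W × ℝ,
        0 ≤ ⟪(K v).1, v.1⟫ + ⟪(K v).2.1, v.2.1⟫ + (K v).2.2 * v.2.2) := by
  intro z w Dsym K
  have hsym : ∀ x y : W, ⟪Dsym x, y⟫ = ⟪x, Dsym y⟫ := by
    intro x y
    simp only [Dsym, ContinuousLinearMap.smul_apply, ContinuousLinearMap.add_apply,
      real_inner_smul_left, real_inner_smul_right, inner_add_left, inner_add_right,
      ContinuousLinearMap.adjoint_inner_left, ContinuousLinearMap.adjoint_inner_right]
    ring
  have hpos : ∀ u : W, 0 ≤ ⟪Dsym u, u⟫ := by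
    intro u
    have := hpsd u
    simp only [Dsym, ContinuousLinearMap.smul_apply, real_inner_smul_left]
    linarith
  have key : ∀ x : W, ⟪Dsym (w + C z), x⟫ = ⟪Dsym x, w + C z⟫ := fun x =>
    (hsym _ x).trans (real_inner_comm _ _)
  have hquad : ∀ v : Z × W × ℝ,
      ⟪(K v).1, v.1⟫ + ⟪(K v).2.1, v.2.1⟫ + (K v).2.2 * v.2.2
        = β⁻¹ * ⟪Dsym (v.2.1 - v.2.2 • (w + C z)), v.2.1 - v.2.2 • (w + C z)⟫ := by
    rintro ⟨a, b, c⟩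
    simp only [K, Prod.smul_fst, Prod.smul_snd, smul_eq_mul, smul_zero,
      inner_zero_left, map_sub, map_smul, inner_sub_left, inner_sub_right,
      real_inner_smul_left, real_inner_smul_right]
    linear_combination (-(β⁻¹ * c)) * key b
  refine ⟨?_, hquad, ?_⟩
  · rintro ⟨a, b, c⟩ ⟨a', b', c'⟩
    simp only [K, Prod.smul_fst, Prod.smul_snd, smul_eq_mul, smul_zero,
      inner_zero_left, inner_zero_right, map_sub, map_smul, inner_sub_left,
      inner_sub_right, real_inner_smul_left, real_inner_smul_right]
    linear_combination β⁻¹ * hsym b b' - β⁻¹ * c' * real_inner_comm b (Dsym (w + C z))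
  · intro v
    rw [hquad v]
    have := hpos (v.2.1 - v.2.2 • (w + C z))
    positivity
end

section
/- Let Σ : W → W be a linear map with Σ ∘ Σ* = β⁻¹(D + D*), and for (z, w) ∈ Z × W define Σ_GEN(z,w) : W → Y by Σ_GEN(z,w)u := (0, Σu, −⟨w + Cz, Σu⟩). Then the fluctuation–dissipation relation Σ_GEN(z,w) ∘ (Σ_GEN(z,w))* = 2·K_GEN(z,w) holds for every (z, w) ∈ Z × W. -/
open RealInnerProductSpace

/-- Let `Σ : W → W` be linear with `Σ ∘ Σ* = β⁻¹(D + D*)`, and for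
`(z, w)` define `Σ_GEN(z,w) : W → Y = Z × W × ℝ` by
`Σ_GEN(z,w)u := (0, Σu, −⟨w + Cz, Σu⟩)`.  Then the fluctuation–dissipation relation
`Σ_GEN(z,w) ∘ (Σ_GEN(z,w))* = 2·K_GEN(z,w)` holds, where `(Σ_GEN(z,w))* : Y → W` is
the adjoint of `Σ_GEN(z,w)` with respect to the product inner product
`⟨(a,b,c),(a',b',c')⟩ = ⟨a,a'⟩ + ⟨b,b'⟩ + c·c'` on `Y`. -/
theorem fluctuation_dissipation_relation
    {Z : Type*} [NormedAddCommGroup Z] [InnerProductSpace ℝ Z] [FiniteDimensional ℝ Z]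
    {W : Type*} [NormedAddCommGroup W] [InnerProductSpace ℝ W] [FiniteDimensional ℝ W]
    (β : ℝ) (hβ : 0 < β)
    (C : Z →L[ℝ] W)
    (D : W →L[ℝ] W)
    (Sig : W →L[ℝ] W)
    (hSig : Sig ∘L ContinuousLinearMap.adjoint Sig
      = β⁻¹ • (D + ContinuousLinearMap.adjoint D)) :
    ∀ (z : Z) (w : W),
      let Dsym : W →L[ℝ] W := ((1 : ℝ) / 2) • (D + ContinuousLinearMap.adjoint D)
      let K : Z × W × ℝ → Z × W × ℝ := fun v =>
        β⁻¹ • ((0 : Z),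
          Dsym v.2.1 - v.2.2 • Dsym (w + C z),
          -⟪Dsym (w + C z), v.2.1⟫ + v.2.2 * ⟪Dsym (w + C z), w + C z⟫)
      let SigGEN : W → Z × W × ℝ := fun u => ((0 : Z), Sig u, -⟪w + C z, Sig u⟫)
      ∀ T : Z × W × ℝ → W,
        -- T is the adjoint of Σ_GEN(z,w) for the product inner product on Y
        (∀ (u : W) (v : Z × W × ℝ),
          ⟪u, T v⟫ = ⟪(SigGEN u).1, v.1⟫ + ⟪(SigGEN u).2.1, v.2.1⟫
            + (SigGEN u).2.2 * v.2.2) →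
        -- fluctuation–dissipation: Σ_GEN ∘ Σ_GEN* = 2 K_GEN
        ∀ v : Z × W × ℝ, SigGEN (T v) = (2 : ℝ) • K v := by

  intro z w Dsym K SigGEN T hT v
  have hTv : T v = ContinuousLinearMap.adjoint Sig (v.2.1 - v.2.2 • (w + C z)) := by
    apply ext_inner_left ℝ
    intro u
    rw [hT u v]
    simp only [SigGEN, ContinuousLinearMap.adjoint_inner_right, inner_sub_right,
      inner_smul_right, inner_zero_left]
    rw [real_inner_comm (w + C z) (Sig u)]
    ring
  have hcomp : ∀ x, Sig (ContinuousLinearMap.adjoint Sig x)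
      = β⁻¹ • (D x + ContinuousLinearMap.adjoint D x) := by
    intro x
    have := congrArg (fun f => f x) hSig
    simpa using this
  rw [hTv]
  have h2 := hcomp (v.2.1 - v.2.2 • (w + C z))
  show ((0 : Z), _, _) = _
  simp only [SigGEN, K, Dsym, h2, Prod.smul_mk, smul_zero, smul_eq_mul]
  refine Prod.ext rfl (Prod.ext ?_ ?_)
  · show β⁻¹ • _ = _
    simp only [map_sub, map_smul, ContinuousLinearMap.smul_apply,
      ContinuousLinearMap.add_apply]
    module
  · show -⟪w + C z, β⁻¹ • _⟫ = _
    simp only [map_sub, map_smul, ContinuousLinearMap.smul_apply,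
      ContinuousLinearMap.add_apply, inner_smul_right, inner_sub_right,
      inner_add_right, inner_add_left, inner_sub_left, inner_smul_left,
      ContinuousLinearMap.adjoint_inner_left, ContinuousLinearMap.adjoint_inner_right]
    have hsymm : ∀ a b : W, ⟪D a, b⟫ = ⟪b, D a⟫ := fun a b => real_inner_comm _ _
    simp only [hsymm, map_add, inner_add_right, inner_add_left, conj_trivial]
    ring
end

section
/- Let I ⊆ ℝ be an interval and let y : I → Y be differentiable with y'(t) = J(y(t))(∇E(y(t))) + K(y(t))(∇S(y(t))) for all t ∈ I. Then t ↦ E(y(t)) is constant on I and t ↦ S(y(t)) is monotone nondecreasing on I. -/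
open RealInnerProductSpace

/-! Along the flow, `d/dt E(y) = ⟪∇E, J∇E⟫ + ⟪∇E, K∇S⟫`: the first term vanishes because `J` is
skew-adjoint, the second equals `⟪K∇E, ∇S⟫ = 0` because `K` is self-adjoint. Likewise
`d/dt S(y) = ⟪∇S, J∇E⟫ + ⟪∇S, K∇S⟫ = -⟪J∇S, ∇E⟫ + ⟪K∇S, ∇S⟫ ≥ 0`. The mean value theorem on the
interval `I` turns these derivative signs into constancy and monotonicity. -/

namespace ContinuousLinearMap

variable {Y : Type*} [NormedAddCommGroup Y] [InnerProductSpace ℝ Y] [CompleteSpace Y]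

theorem inner_apply_eq_zero_of_adjoint_apply_eq_zero {A : Y →L[ℝ] Y} {w : Y}
    (hw : adjoint A w = 0) (v : Y) : ⟪w, A v⟫ = 0 := by
  rw [← adjoint_inner_left, hw, inner_zero_left]

theorem inner_apply_self_eq_zero_of_adjoint_eq_neg_s16 {A : Y →L[ℝ] Y} (hA : adjoint A = -A)
    (v : Y) : ⟪v, A v⟫ = 0 := by
  have h := adjoint_inner_left A v v
  rw [hA, neg_apply, inner_neg_left, real_inner_comm] at h
  linarith

theorem inner_add_apply_eq_zero_of_skew_of_apply_eq_zero {J K : Y →L[ℝ] Y} {e : Y}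
    (hJ : adjoint J = -J) (hK : adjoint K = K) (hKe : K e = 0) (s : Y) :
    ⟪e, J e + K s⟫ = 0 := by
  rw [inner_add_right, inner_apply_self_eq_zero_of_adjoint_eq_neg_s16 hJ,
    inner_apply_eq_zero_of_adjoint_apply_eq_zero (by rw [hK, hKe]), add_zero]

theorem inner_add_apply_nonneg_of_skew_of_apply_eq_zero {J K : Y →L[ℝ] Y} {s : Y}
    (hJ : adjoint J = -J) (hJs : J s = 0) (hK : ∀ v, 0 ≤ ⟪K v, v⟫) (e : Y) :
    0 ≤ ⟪s, J e + K s⟫ := by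
  have hJadj : adjoint J s = 0 := by rw [hJ, neg_apply, hJs, neg_zero]
  rw [inner_add_right, inner_apply_eq_zero_of_adjoint_apply_eq_zero hJadj, zero_add,
    real_inner_comm]
  exact hK s

end ContinuousLinearMap

theorem DifferentiableAt.hasDerivWithinAt_comp_eq_inner_gradient {Y : Type*}
    [NormedAddCommGroup Y] [InnerProductSpace ℝ Y] [CompleteSpace Y] {f : Y → ℝ}
    {γ : ℝ → Y} {v : Y} {I : Set ℝ} {t : ℝ} (hf : DifferentiableAt ℝ f (γ t))
    (hγ : HasDerivWithinAt γ v I t) :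
    HasDerivWithinAt (fun t => f (γ t)) ⟪gradient f (γ t), v⟫ I t := by
  rw [inner_gradient_left]
  exact hf.hasFDerivAt.comp_hasDerivWithinAt t hγ

namespace Set.OrdConnected

variable {I : Set ℝ} {f f' : ℝ → ℝ}

theorem monotoneOn_of_hasDerivWithinAt_nonneg (hI : I.OrdConnected)
    (hf : ∀ t ∈ I, HasDerivWithinAt f (f' t) I t) (hf' : ∀ t ∈ I, 0 ≤ f' t) :
    MonotoneOn f I :=
  _root_.monotoneOn_of_hasDerivWithinAt_nonneg hI.convex
    (fun t ht => (hf t ht).continuousWithinAt)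
    (fun t ht => (hf t (interior_subset ht)).mono interior_subset)
    (fun t ht => hf' t (interior_subset ht))

theorem eq_of_hasDerivWithinAt_eq_zero (hI : I.OrdConnected)
    (hf : ∀ t ∈ I, HasDerivWithinAt f (f' t) I t) (hf' : ∀ t ∈ I, f' t = 0) :
    ∀ s ∈ I, ∀ t ∈ I, f s = f t := by
  have hmono := hI.monotoneOn_of_hasDerivWithinAt_nonneg hf fun t ht => (hf' t ht).ge
  have hanti : AntitoneOn f I := fun s hs t ht hst => neg_le_neg_iff.mp <|
    hI.monotoneOn_of_hasDerivWithinAt_nonneg (fun t ht => (hf t ht).neg)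
      (fun t ht => by simp [hf' t ht]) hs ht hst
  intro s hs t ht
  rcases le_total s t with hst | hts
  · exact le_antisymm (hmono hs ht hst) (hanti hs ht hst)
  · exact le_antisymm (hanti ht hs hts) (hmono ht hs hts)

end Set.OrdConnected

/-- Let `Y` be a finite-dimensional real inner product space,
`E, S : Y → ℝ` continuously differentiable, and `J, K` assign to each `y` linear
operators with `J(y)` skew-adjoint, `K(y)` self-adjoint positive semidefinite, and
the non-interaction conditions `J(y)∇S(y) = 0`, `K(y)∇E(y) = 0`.  If `y : I → Y` is
differentiable on an interval `I` with `y' = J(y)∇E(y) + K(y)∇S(y)`, then `E ∘ y` is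
constant on `I` and `S ∘ y` is nondecreasing on `I`. -/
theorem generic_energy_conserved_entropy_nondecreasing
    {Y : Type*} [NormedAddCommGroup Y] [InnerProductSpace ℝ Y] [FiniteDimensional ℝ Y]
    (E S : Y → ℝ) (hE : ContDiff ℝ 1 E) (hS : ContDiff ℝ 1 S)
    (J K : Y → Y →L[ℝ] Y)
    (hJ : ∀ y : Y, ContinuousLinearMap.adjoint (J y) = -(J y))
    (hKsa : ∀ y : Y, ContinuousLinearMap.adjoint (K y) = K y)
    (hKpos : ∀ (y : Y) (v : Y), 0 ≤ ⟪K y v, v⟫)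
    (hNIJ : ∀ y : Y, J y (gradient S y) = 0)
    (hNIK : ∀ y : Y, K y (gradient E y) = 0)
    (I : Set ℝ) (hI : Set.OrdConnected I)
    (y : ℝ → Y)
    (hy : ∀ t ∈ I, HasDerivWithinAt y
      (J (y t) (gradient E (y t)) + K (y t) (gradient S (y t))) I t) :
    (∀ s ∈ I, ∀ t ∈ I, E (y s) = E (y t)) ∧
    (∀ s ∈ I, ∀ t ∈ I, s ≤ t → S (y s) ≤ S (y t)) :=
  ⟨hI.eq_of_hasDerivWithinAt_eq_zero
    (fun t ht => (hE.differentiable one_ne_zero _).hasDerivWithinAt_comp_eq_inner_gradient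
      (hy t ht))
    (fun _ _ => ContinuousLinearMap.inner_add_apply_eq_zero_of_skew_of_apply_eq_zero
      (hJ _) (hKsa _) (hNIK _) _),
  hI.monotoneOn_of_hasDerivWithinAt_nonneg
    (fun t ht => (hS.differentiable one_ne_zero _).hasDerivWithinAt_comp_eq_inner_gradient
      (hy t ht))
    (fun _ _ => ContinuousLinearMap.inner_add_apply_nonneg_of_skew_of_apply_eq_zero
      (hJ _) (hNIJ _) (hKpos _) _)⟩
end

section
/- Suppose that J(y) is skew-symmetric for every y, that div J = 0 in the sense that Σ_j ∂_{y_j} J_{ij}(y) = 0 for every index i and every y ∈ ℝⁿ, and that J(y)(∇S(y)) = 0 for every y. Then the vector field y ↦ e^{S(y)}·J(y)(∇E(y)) is divergence-free: Σ_i ∂_{y_i}(e^{S(y)}·(J(y)∇E(y))_i) = 0 for all y ∈ ℝⁿ. -/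
/-!
For `F = J ∇E`, the product rule gives
`div (e^S F) = e^S (⟨∇S, J ∇E⟩ + ∑ⱼ (∑ᵢ ∂ᵢ Jᵢⱼ) ∂ⱼE + ∑ᵢⱼ Jᵢⱼ ∂ᵢ∂ⱼE)`.
Skew-symmetry kills each term: `⟨∇S, J ∇E⟩ = -⟨J ∇S, ∇E⟩ = 0`; the divergence of a column of
`J` is minus the divergence of the corresponding row, which vanishes; and the last term
contracts the skew matrix `J` with the symmetric Hessian of `E`.
-/

section SkewContraction

variable {ι R : Type*} [Fintype ι] [CommRing R]

theorem sum_sum_mul_eq_zero_of_skew_of_symm [IsAddTorsionFree R] {A H : ι → ι → R}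
    (hA : ∀ i j, A i j = -A j i) (hH : ∀ i j, H i j = H j i) :
    ∑ i, ∑ j, A i j * H i j = 0 := by
  rw [← self_eq_neg]
  calc ∑ i, ∑ j, A i j * H i j = ∑ i, ∑ j, A j i * H j i := Finset.sum_comm
    _ = -∑ i, ∑ j, A i j * H i j := by
      simp only [← Finset.sum_neg_distrib, ← neg_mul, ← hA, hH]

theorem sum_mul_sum_eq_zero_of_skew {A : ι → ι → R} {v : ι → R}
    (hA : ∀ i j, A i j = -A j i) (hv : ∀ i, ∑ j, A i j * v j = 0) (w : ι → R) :
    ∑ i, v i * ∑ j, A i j * w j = 0 := by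
  have hvA : ∀ j, ∑ i, v i * A i j = 0 := fun j => by
    simpa [hA _ j, mul_comm] using congrArg Neg.neg (hv j)
  calc ∑ i, v i * ∑ j, A i j * w j = ∑ j, (∑ i, v i * A i j) * w j := by
        simp only [Finset.mul_sum, Finset.sum_mul, mul_assoc]
        exact Finset.sum_comm
    _ = 0 := by simp [hvA]

end SkewContraction

section Divergence

variable {ι : Type*} [Fintype ι] [DecidableEq ι]

noncomputable def divergence (F : EuclideanSpace ℝ ι → ι → ℝ) (y : EuclideanSpace ℝ ι) : ℝ :=
  ∑ i, fderiv ℝ (fun z => F z i) y (EuclideanSpace.single i 1)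

theorem gradient_apply_eq_fderiv_single (f : EuclideanSpace ℝ ι → ℝ) (y : EuclideanSpace ℝ ι)
    (j : ι) : gradient f y j = fderiv ℝ f y (EuclideanSpace.single j 1) := by
  rw [← inner_gradient_left, EuclideanSpace.inner_single_right, one_mul]
  rfl

theorem divergence_mul {f : EuclideanSpace ℝ ι → ℝ} {F : EuclideanSpace ℝ ι → ι → ℝ}
    {y : EuclideanSpace ℝ ι} (hf : DifferentiableAt ℝ f y)
    (hF : ∀ i, DifferentiableAt ℝ (fun z => F z i) y) :
    divergence (fun z i => f z * F z i) y = ∑ i, gradient f y i * F y i + f y * divergence F y := by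
  simp only [divergence, fderiv_fun_mul hf (hF _), Finset.mul_sum, ← Finset.sum_add_distrib,
    gradient_apply_eq_fderiv_single, add_apply, smul_apply, smul_eq_mul]
  exact Finset.sum_congr rfl fun i _ => by ring

theorem divergence_sum_mul {κ : Type*} [Fintype κ] {A : EuclideanSpace ℝ ι → ι → κ → ℝ}
    {G : EuclideanSpace ℝ ι → κ → ℝ} {y : EuclideanSpace ℝ ι}
    (hA : ∀ i j, DifferentiableAt ℝ (fun z => A z i j) y)
    (hG : ∀ j, DifferentiableAt ℝ (fun z => G z j) y) :
    divergence (fun z i => ∑ j, A z i j * G z j) y =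
      ∑ j, divergence (fun z i => A z i j) y * G y j +
        ∑ i, ∑ j, A y i j * fderiv ℝ (fun z => G z j) y (EuclideanSpace.single i 1) := by
  have hterm : ∀ i, fderiv ℝ (fun z => ∑ j, A z i j * G z j) y (EuclideanSpace.single i 1) =
      ∑ j, (fderiv ℝ (fun z => A z i j) y (EuclideanSpace.single i 1) * G y j +
        A y i j * fderiv ℝ (fun z => G z j) y (EuclideanSpace.single i 1)) := fun i => by
    rw [fderiv_fun_sum fun j _ => (hA i j).fun_mul (hG j)]
    simp only [fderiv_fun_mul (hA i _) (hG _), sum_apply, add_apply, smul_apply, smul_eq_mul]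
    exact Finset.sum_congr rfl fun j _ => by ring
  simp only [divergence, hterm, Finset.sum_add_distrib, Finset.sum_mul]
  rw [Finset.sum_comm (γ := ι)]

theorem divergence_column_eq_neg_divergence_row {J : EuclideanSpace ℝ ι → ι → ι → ℝ}
    (hJ : ∀ y i j, J y i j = -J y j i) (y : EuclideanSpace ℝ ι) (j : ι) :
    divergence (fun z i => J z i j) y = -divergence (fun z => J z j) y := by
  simp only [divergence, ← Finset.sum_neg_distrib]
  refine Finset.sum_congr rfl fun i _ => ?_
  rw [show (fun z => J z i j) = fun z => -J z j i from funext fun z => hJ z i j, fderiv_fun_neg]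
  rfl

theorem fderiv_gradient_apply_comm {f : EuclideanSpace ℝ ι → ℝ} {y : EuclideanSpace ℝ ι}
    (hf : ContDiff ℝ 2 f) (i j : ι) :
    fderiv ℝ (fun z => gradient f z j) y (EuclideanSpace.single i 1) =
      fderiv ℝ (fun z => gradient f z i) y (EuclideanSpace.single j 1) := by
  have hf' : Differentiable ℝ (fderiv ℝ f) :=
    (hf.fderiv_right (by norm_num)).differentiable one_ne_zero
  simp only [gradient_apply_eq_fderiv_single,
    fderiv_clm_apply (hf' y) (differentiableAt_const _), fderiv_fun_const]
  simpa using (hf.contDiffAt.isSymmSndFDerivAt (by simp)).eq _ _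

end Divergence

/-- Let `S : ℝⁿ → ℝ` be `C¹`, `E : ℝⁿ → ℝ` be `C²`, and
`J : ℝⁿ → ℝ^{n×n}` be `C¹` (entrywise).  Suppose `J(y)` is skew-symmetric for every
`y`, `div J = 0` in the sense `Σ_j ∂_{y_j} J_{ij}(y) = 0` for every `i` and `y`, and
`J(y)(∇S(y)) = 0` for every `y`.  Then the vector field
`y ↦ e^{S(y)}·J(y)(∇E(y))` is divergence-free:
`Σ_i ∂_{y_i}(e^{S(y)}·(J(y)∇E(y))_i) = 0` for all `y`. -/
theorem generic_hamiltonian_field_divergence_free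
    (n : ℕ)
    (S : EuclideanSpace ℝ (Fin n) → ℝ) (hS : ContDiff ℝ 1 S)
    (E : EuclideanSpace ℝ (Fin n) → ℝ) (hE : ContDiff ℝ 2 E)
    (J : EuclideanSpace ℝ (Fin n) → Fin n → Fin n → ℝ)
    (hJ : ∀ i j : Fin n, ContDiff ℝ 1 (fun y => J y i j))
    (hskew : ∀ (y : EuclideanSpace ℝ (Fin n)) (i j : Fin n), J y i j = -J y j i)
    (hdiv : ∀ (i : Fin n) (y : EuclideanSpace ℝ (Fin n)),
      ∑ j : Fin n, fderiv ℝ (fun y => J y i j) y (EuclideanSpace.single j 1) = 0)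
    (hJS : ∀ (i : Fin n) (y : EuclideanSpace ℝ (Fin n)),
      ∑ j : Fin n, J y i j * gradient S y j = 0) :
    ∀ y : EuclideanSpace ℝ (Fin n),
      ∑ i : Fin n, fderiv ℝ
        (fun y => Real.exp (S y) * ∑ j : Fin n, J y i j * gradient E y j)
        y (EuclideanSpace.single i 1) = 0 := by
  intro y
  have hSd : DifferentiableAt ℝ S y := hS.differentiable one_ne_zero y
  have hJd (i j : Fin n) : DifferentiableAt ℝ (fun z => J z i j) y :=
    (hJ i j).differentiable one_ne_zero y
  have hEd (j : Fin n) : DifferentiableAt ℝ (fun z => gradient E z j) y := by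
    simp only [gradient_apply_eq_fderiv_single]
    exact ((hE.fderiv_right le_rfl).differentiable one_ne_zero y).clm_apply
      (differentiableAt_const _)
  have hexpS (i : Fin n) :
      gradient (fun z => Real.exp (S z)) y i = Real.exp (S y) * gradient S y i := by
    simp [gradient_apply_eq_fderiv_single, fderiv_exp hSd]
  have hcol (j : Fin n) : divergence (fun z i => J z i j) y = 0 := by
    rw [divergence_column_eq_neg_divergence_row hskew, divergence, hdiv, neg_zero]
  change divergence (fun z i => Real.exp (S z) * ∑ j, J z i j * gradient E z j) y = 0
  rw [divergence_mul hSd.exp fun i => .fun_sum fun j _ => (hJd i j).fun_mul (hEd j),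
    divergence_sum_mul hJd hEd]
  simp only [hexpS, mul_assoc, ← Finset.mul_sum, sum_mul_sum_eq_zero_of_skew (hskew y) (hJS · y)]
  rw [sum_sum_mul_eq_zero_of_skew_of_symm (hskew y) (fderiv_gradient_apply_comm hE)]
  simp [hcol]
end

section
/- Define ν : Z × W → ℝ by ν(z,w) := exp(−β(H_A(z) + ⟨Cz, w⟩ + (1/2)‖w‖²)). Then for every (z, w) ∈ Z × W: (i) div_z[ν(z,w)·J_A(z)(∇H_A(z) + C*w)] = 0, and (ii) div_w[ν(z,w)·D(w + Cz)] + β⁻¹·div_w[D_sym(∇_w ν(z,w))] = 0, where div_z and div_w denote divergences in the z- and w-variables with respect to orthonormal coordinates and ∇_w ν is the gradient of ν in the w-variable. In particular the unnormalized measure ν(z,w) dz dw is stationary for the Fokker–Planck operator of the coarse-grained evolution. -/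
open RealInnerProductSpace

/-! Both divergences are traces of derivatives, expanded by the product rule
`div (f • V) = f div V + ⟪∇f, V⟫`.

(i) With `v = ∇H_A(z) + C*w` one has `∇_z ν = -βν v`, so `⟪∇_z ν, J_A v⟫ = 0` by skewness.
Moreover `div (J_A v) = tr (J_A ∇²H_A) + Σᵢ ⟪(∂ᵢJ_A) v, eᵢ⟫`; the first trace vanishes because
`J_A` is skew and the Hessian symmetric, the second sum equals `-⟪v, div J_A⟫ = 0` because each
`∂ᵢJ_A` is skew as well.

(ii) Here `∇_w ν = -βν (w + Cz)`, so `β⁻¹ D_sym ∇_w ν = -ν D_sym (w + Cz)` and the two divergences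
cancel, since `D` and `D_sym` have the same trace and the same quadratic form. -/

section

open InnerProductSpace ContinuousLinearMap

variable {E F : Type*} [NormedAddCommGroup E] [InnerProductSpace ℝ E]
  [NormedAddCommGroup F] [InnerProductSpace ℝ F]

theorem OrthonormalBasis.sum_inner_apply_self_eq_trace {ι : Type*} [Fintype ι]
    (b : OrthonormalBasis ι ℝ E) (A : E →L[ℝ] E) :
    ∑ i, ⟪A (b i), b i⟫ = LinearMap.trace ℝ E A := by
  simp [LinearMap.trace_eq_sum_inner _ b, real_inner_comm]

theorem OrthonormalBasis.trace_flip_eq_zero {ι : Type*} [Fintype ι] (b : OrthonormalBasis ι ℝ E)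
    {J' : E →L[ℝ] E →L[ℝ] E} (hskew : ∀ e x y, ⟪J' e x, y⟫ = -⟪x, J' e y⟫)
    (hdiv : ∀ i, ∑ j, ⟪b i, J' (b j) (b j)⟫ = 0) (v : E) :
    LinearMap.trace ℝ E (J'.flip v) = 0 := by
  rw [← b.sum_inner_apply_self_eq_trace]
  calc ∑ j, ⟪J'.flip v (b j), b j⟫ = -∑ j, ⟪v, J' (b j) (b j)⟫ := by
        simp [hskew, Finset.sum_neg_distrib]
    _ = -∑ j, ∑ i, ⟪v, b i⟫ * ⟪b i, J' (b j) (b j)⟫ := by simp_rw [b.sum_inner_mul_inner]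
    _ = -∑ i, ⟪v, b i⟫ * ∑ j, ⟪b i, J' (b j) (b j)⟫ := by
        rw [Finset.sum_comm]; simp_rw [Finset.mul_sum]
    _ = 0 := by simp [hdiv]

theorem HasFDerivAt.fderiv_inner_apply {J : F → E →L[ℝ] E} {J' : F →L[ℝ] E →L[ℝ] E} {z : F}
    (hJ : HasFDerivAt J J' z) (c u : E) (e : F) :
    fderiv ℝ (fun z' => ⟪c, J z' u⟫) z e = ⟪c, J' e u⟫ := by
  have h : HasFDerivAt (fun z' => ⟪c, J z' u⟫) ((innerSL ℝ c ∘L apply ℝ E u) ∘L J') z :=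
    (innerSL ℝ c ∘L apply ℝ E u).hasFDerivAt.comp z hJ
  rw [h.fderiv]
  rfl

section Gradient

variable [CompleteSpace E] {f g : E → ℝ} {p q x : E}

theorem HasGradientAt.add (hf : HasGradientAt f p x) (hg : HasGradientAt g q x) :
    HasGradientAt (fun y => f y + g y) (p + q) x := by
  rw [hasGradientAt_iff_hasFDerivAt, map_add]
  exact hf.hasFDerivAt.add hg.hasFDerivAt

theorem HasGradientAt.add_const (hf : HasGradientAt f p x) (c : ℝ) :
    HasGradientAt (fun y => f y + c) p x := by
  simpa using hf.add (hasGradientAt_const x c)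

theorem HasGradientAt.const_add (hf : HasGradientAt f p x) (c : ℝ) :
    HasGradientAt (fun y => c + f y) p x := by
  simpa using (hasGradientAt_const x c).add hf

theorem HasGradientAt.exp_neg_mul (hf : HasGradientAt f p x) (β : ℝ) :
    HasGradientAt (fun y => Real.exp (-β * f y)) ((-β * Real.exp (-β * f x)) • p) x := by
  rw [hasGradientAt_iff_hasFDerivAt, mul_comm, mul_smul, map_smul, map_smul]
  exact (hf.hasFDerivAt.const_mul (-β)).exp

theorem hasGradientAt_inner_right (v x : E) : HasGradientAt (fun y => ⟪v, y⟫) v x := by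
  rw [hasGradientAt_iff_hasFDerivAt]
  exact (innerSL ℝ v).hasFDerivAt

theorem hasGradientAt_inner_apply_left [CompleteSpace F] (C : E →L[ℝ] F) (w : F) (x : E) :
    HasGradientAt (fun y => ⟪C y, w⟫) (adjoint C w) x := by
  have h : (fun y => ⟪C y, w⟫) = fun y => ⟪adjoint C w, y⟫ := by
    funext y
    rw [← adjoint_inner_right, real_inner_comm]
  rw [h]
  exact hasGradientAt_inner_right _ x

theorem hasGradientAt_half_mul_norm_sq (x : E) :
    HasGradientAt (fun y => 1 / 2 * ‖y‖ ^ 2) x x := by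
  rw [hasGradientAt_iff_hasFDerivAt]
  refine ((hasStrictFDerivAt_norm_sq x).hasFDerivAt.const_mul (1 / 2 : ℝ)).congr_fderiv ?_
  ext y
  simp

theorem ContDiffAt.exists_hasFDerivAt_gradient_isSymmetric (hf : ContDiffAt ℝ 2 f x) :
    ∃ B : E →L[ℝ] E, HasFDerivAt (gradient f) B x ∧ (B : E →ₗ[ℝ] E).IsSymmetric := by
  -- over `ℝ` the conjugate-linear Riesz map is linear: `starRingEnd ℝ` is `RingHom.id ℝ` by `rfl`
  let riesz : StrongDual ℝ E →L[ℝ] E :=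
    ((toDual ℝ E).symm.toContinuousLinearEquiv : StrongDual ℝ E →SL[starRingEnd ℝ] E)
  have hdiff : DifferentiableAt ℝ (fderiv ℝ f) x :=
    (hf.fderiv_right (m := 1) (by norm_num)).differentiableAt one_ne_zero
  refine ⟨riesz ∘L fderiv ℝ (fderiv ℝ f) x, riesz.hasFDerivAt.comp x hdiff.hasFDerivAt,
    fun u v => ?_⟩
  change ⟪(toDual ℝ E).symm _, v⟫ = ⟪u, (toDual ℝ E).symm _⟫
  rw [← real_inner_comm u, toDual_symm_apply, toDual_symm_apply]
  exact hf.isSymmSndFDerivAt (by simp) u v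

theorem trace_fderiv_smul [FiniteDimensional ℝ E] {V : E → E} {A : E →L[ℝ] E}
    (hf : HasGradientAt f p x) (hV : HasFDerivAt V A x) :
    LinearMap.trace ℝ E (fderiv ℝ (fun y => f y • V y) x)
      = f x * LinearMap.trace ℝ E A + ⟪p, V x⟫ := by
  rw [(hf.hasFDerivAt.fun_smul hV).fderiv]
  simp only [toLinearMap_add, toLinearMap_smul, map_add, map_smul, coe_smulRight]
  rw [LinearMap.trace_smulRight]
  simp

end Gradient

section Adjoint

variable [CompleteSpace E] {T : E →L[ℝ] E}

theorem ContinuousLinearMap.inner_map_eq_neg_of_adjoint_eq_neg (hT : adjoint T = -T) (x y : E) :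
    ⟪T x, y⟫ = -⟪x, T y⟫ := by
  rw [← adjoint_inner_right, hT, neg_apply, inner_neg_right]

theorem ContinuousLinearMap.inner_map_self_eq_zero_of_adjoint_eq_neg (hT : adjoint T = -T)
    (x : E) : ⟪x, T x⟫ = 0 := by
  linarith [inner_map_eq_neg_of_adjoint_eq_neg hT x x, real_inner_comm x (T x)]

theorem ContinuousLinearMap.trace_comp_eq_zero_of_adjoint_eq_neg [FiniteDimensional ℝ E]
    (hT : adjoint T = -T) {B : E →L[ℝ] E} (hB : (B : E →ₗ[ℝ] E).IsSymmetric) :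
    LinearMap.trace ℝ E (T ∘L B) = 0 := by
  let b := stdOrthonormalBasis ℝ E
  have h : LinearMap.trace ℝ E (T ∘L B) = -LinearMap.trace ℝ E (B ∘L T) := by
    simp only [LinearMap.trace_eq_sum_inner _ b, ← Finset.sum_neg_distrib]
    refine Finset.sum_congr rfl fun i _ => ?_
    have hBi : ⟪B (T (b i)), b i⟫ = ⟪T (b i), B (b i)⟫ := hB _ _
    calc ⟪b i, T (B (b i))⟫ = -⟪T (b i), B (b i)⟫ := by
          rw [real_inner_comm, inner_map_eq_neg_of_adjoint_eq_neg hT, real_inner_comm]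
      _ = -⟪b i, B (T (b i))⟫ := by rw [← hBi, real_inner_comm]
  rw [toLinearMap_comp, toLinearMap_comp, LinearMap.trace_comp_comm' (T : E →ₗ[ℝ] E)] at h
  rw [toLinearMap_comp]
  linarith

theorem ContinuousLinearMap.trace_adjoint [FiniteDimensional ℝ E] (D : E →L[ℝ] E) :
    LinearMap.trace ℝ E (adjoint D) = LinearMap.trace ℝ E D := by
  let b := stdOrthonormalBasis ℝ E
  rw [← b.sum_inner_apply_self_eq_trace, ← b.sum_inner_apply_self_eq_trace]
  refine Finset.sum_congr rfl fun i _ => ?_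
  rw [adjoint_inner_left, real_inner_comm]

theorem trace_half_smul_add_adjoint [FiniteDimensional ℝ E] (D : E →L[ℝ] E) :
    LinearMap.trace ℝ E ((((1 : ℝ) / 2) • (D + adjoint D) : E →L[ℝ] E) : E →ₗ[ℝ] E)
      = LinearMap.trace ℝ E D := by
  rw [toLinearMap_smul, toLinearMap_add, map_smul, map_add, trace_adjoint, smul_eq_mul]
  ring

theorem inner_half_smul_add_adjoint_apply_self (D : E →L[ℝ] E) (x : E) :
    ⟪x, (((1 : ℝ) / 2) • (D + adjoint D)) x⟫ = ⟪x, D x⟫ := by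
  rw [smul_apply, add_apply, real_inner_smul_right, inner_add_right, adjoint_inner_right,
    real_inner_comm (D x)]
  ring

theorem HasFDerivAt.inner_apply_eq_neg_of_adjoint_eq_neg {J : F → E →L[ℝ] E}
    {J' : F →L[ℝ] E →L[ℝ] E} {z : F} (hJ : HasFDerivAt J J' z)
    (hskew : ∀ z, adjoint (J z) = -J z) (e : F) (x y : E) :
    ⟪J' e x, y⟫ = -⟪x, J' e y⟫ := by
  have hfun : (fun z' => ⟪y, J z' x⟫) = fun z' => -⟪x, J z' y⟫ := by
    funext z'
    rw [real_inner_comm, inner_map_eq_neg_of_adjoint_eq_neg (hskew z')]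
  have h := congrArg (fun φ => fderiv ℝ φ z e) hfun
  simp only [fderiv_fun_neg, neg_apply, hJ.fderiv_inner_apply] at h
  rw [real_inner_comm, h]

end Adjoint

section DivergenceIdentities

variable [CompleteSpace E] [FiniteDimensional ℝ E]

theorem trace_fderiv_smul_apply_gradient_add_eq_zero {f H : E → ℝ} {J : E → E →L[ℝ] E}
    {J' : E →L[ℝ] E →L[ℝ] E} {z a : E} {r : ℝ}
    (hf : HasGradientAt f (r • (gradient H z + a)) z) (hH : ContDiffAt ℝ 2 H z)
    (hJ : HasFDerivAt J J' z) (hskew : adjoint (J z) = -J z)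
    (hdiv : ∀ v, LinearMap.trace ℝ E (J'.flip v) = 0) :
    LinearMap.trace ℝ E (fderiv ℝ (fun z' => f z' • J z' (gradient H z' + a)) z) = 0 := by
  obtain ⟨B, hB, hBsymm⟩ := hH.exists_hasFDerivAt_gradient_isSymmetric
  have hG : HasFDerivAt (fun z' => J z' (gradient H z' + a))
      (J z ∘L B + J'.flip (gradient H z + a)) z :=
    hJ.clm_apply (hB.add_const a)
  rw [trace_fderiv_smul hf hG, toLinearMap_add, map_add,
    trace_comp_eq_zero_of_adjoint_eq_neg hskew hBsymm, hdiv, real_inner_smul_left,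
    inner_map_self_eq_zero_of_adjoint_eq_neg hskew]
  simp

theorem trace_fderiv_smul_add_inv_mul_trace_fderiv_apply_gradient_eq_zero {f : E → ℝ} {β : ℝ}
    (hβ : β ≠ 0) {c : E} (hf : ∀ w, HasGradientAt f ((-β * f w) • (w + c)) w)
    {D S : E →L[ℝ] E} (htrace : LinearMap.trace ℝ E S = LinearMap.trace ℝ E D)
    (hquad : ∀ x, ⟪x, S x⟫ = ⟪x, D x⟫) (w : E) :
    LinearMap.trace ℝ E (fderiv ℝ (fun w' => f w' • D (w' + c)) w)
      + β⁻¹ * LinearMap.trace ℝ E (fderiv ℝ (fun w' => S (gradient f w')) w) = 0 := by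
  have hfield : (fun w' => S (gradient f w')) = fun w' => f w' • ((-β) • S) (w' + c) := by
    funext w'
    rw [(hf w').gradient, map_smul, smul_apply, smul_smul, mul_comm (f w')]
  have hshift : HasFDerivAt (fun w' => w' + c) (ContinuousLinearMap.id ℝ E) w :=
    (hasFDerivAt_id w).add_const c
  have hD : ∀ A : E →L[ℝ] E, HasFDerivAt (fun w' => A (w' + c)) A w := fun A =>
    (A.hasFDerivAt.comp w hshift).congr_fderiv (comp_id A)
  rw [hfield, trace_fderiv_smul (hf w) (hD D), trace_fderiv_smul (hf w) (hD _),
    toLinearMap_smul, map_smul, htrace, smul_apply, real_inner_smul_left, real_inner_smul_left,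
    real_inner_smul_right, hquad, smul_eq_mul]
  field_simp
  ring

end DivergenceIdentities

end

/-- Define `ν(z,w) := exp(−β(H_A(z) + ⟨Cz,w⟩ + ½‖w‖²))`.  Then
(i) `div_z[ν(z,w)·J_A(z)(∇H_A(z) + C*w)] = 0` and
(ii) `div_w[ν(z,w)·D(w + Cz)] + β⁻¹·div_w[D_sym(∇_w ν(z,w))] = 0`,
where the divergences are computed with respect to orthonormal coordinates (i.e.
orthonormal bases of `Z` resp. `W`).  In particular the unnormalized measure
`ν(z,w) dz dw` is stationary for the Fokker–Planck operator of the coarse-grained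
evolution. -/
theorem invariant_measure_divergence_identities
    {Z : Type*} [NormedAddCommGroup Z] [InnerProductSpace ℝ Z] [FiniteDimensional ℝ Z]
    {W : Type*} [NormedAddCommGroup W] [InnerProductSpace ℝ W] [FiniteDimensional ℝ W]
    (β : ℝ) (hβ : 0 < β)
    (C : Z →L[ℝ] W)
    (HA : Z → ℝ) (hHA : ContDiff ℝ 2 HA)
    (D : W →L[ℝ] W)
    (JA : Z → Z →L[ℝ] Z) (hJAsmooth : ContDiff ℝ 1 JA)
    (hJAskew : ∀ z : Z, ContinuousLinearMap.adjoint (JA z) = -(JA z))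
    (bz : OrthonormalBasis (Fin (Module.finrank ℝ Z)) ℝ Z)
    -- div_z J_A = 0 : in orthonormal coordinates Σ_j ∂_{z_j}(J_A(z))_{ij} = 0
    (hJAdiv : ∀ (z : Z) (i : Fin (Module.finrank ℝ Z)),
      ∑ j, fderiv ℝ (fun z' : Z => ⟪bz i, JA z' (bz j)⟫) z (bz j) = 0)
    (ν : Z → W → ℝ)
    (hν : ν = fun z w => Real.exp (-β * (HA z + ⟪C z, w⟫ + (1 / 2) * ‖w‖ ^ 2))) :
    ∀ (z : Z) (w : W),
      -- (i) the z-divergence of z' ↦ ν(z',w)·J_A(z')(∇H_A(z') + C*w) vanishes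
      (∑ i, ⟪fderiv ℝ
          (fun z' : Z => ν z' w •
            (JA z') (gradient HA z' + ContinuousLinearMap.adjoint C w))
          z (bz i), bz i⟫ = 0) ∧
      -- (ii) the w-divergence identity, for every orthonormal basis of W
      ∀ bw : OrthonormalBasis (Fin (Module.finrank ℝ W)) ℝ W,
        (∑ i, ⟪fderiv ℝ (fun w' : W => ν z w' • D (w' + C z)) w (bw i), bw i⟫)
          + β⁻¹ * (∑ i, ⟪fderiv ℝ
              (fun w' : W => (((1 : ℝ) / 2) • (D + ContinuousLinearMap.adjoint D))
                (gradient (fun u : W => ν z u) w'))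
              w (bw i), bw i⟫) = 0 := by
  intro z w
  subst hν
  refine ⟨?_, fun bw => ?_⟩
  · have hJ := ((hJAsmooth.differentiable one_ne_zero) z).hasFDerivAt
    have hgrad : HasGradientAt (fun z' => Real.exp (-β * (HA z' + ⟪C z', w⟫ + 1 / 2 * ‖w‖ ^ 2)))
        ((-β * Real.exp (-β * (HA z + ⟪C z, w⟫ + 1 / 2 * ‖w‖ ^ 2)))
          • (gradient HA z + ContinuousLinearMap.adjoint C w)) z :=
      ((((hHA.differentiable (by norm_num)) z).hasGradientAt.add
        (hasGradientAt_inner_apply_left C w z)).add_const _).exp_neg_mul β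
    have hdiv : ∀ i, ∑ j, ⟪bz i, fderiv ℝ JA z (bz j) (bz j)⟫ = 0 := fun i => by
      simpa only [hJ.fderiv_inner_apply] using hJAdiv z i
    rw [bz.sum_inner_apply_self_eq_trace]
    exact trace_fderiv_smul_apply_gradient_add_eq_zero hgrad hHA.contDiffAt hJ (hJAskew z)
      (bz.trace_flip_eq_zero (hJ.inner_apply_eq_neg_of_adjoint_eq_neg hJAskew) hdiv)
  · have hgrad : ∀ w',
        HasGradientAt (fun u => Real.exp (-β * (HA z + ⟪C z, u⟫ + 1 / 2 * ‖u‖ ^ 2)))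
        ((-β * Real.exp (-β * (HA z + ⟪C z, w'⟫ + 1 / 2 * ‖w'‖ ^ 2))) • (w' + C z)) w' := by
      intro w'
      rw [add_comm w']
      exact (((hasGradientAt_inner_right (C z) w').const_add (HA z)).add
        (hasGradientAt_half_mul_norm_sq w')).exp_neg_mul β
    rw [bw.sum_inner_apply_self_eq_trace, bw.sum_inner_apply_self_eq_trace]
    exact trace_fderiv_smul_add_inv_mul_trace_fderiv_apply_gradient_eq_zero hβ.ne' hgrad
      (trace_half_smul_add_adjoint D) (inner_half_smul_add_adjoint_apply_self D) w
end

section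
/- Define J_GEN : Y → (linear maps Y → Y) by J_GEN(z,w,e)(a,b,c) := (J_A(z)a, −D_skw b, 0). If J_A satisfies the Jacobi identity, i.e. for all z ∈ Z and all μ₁, μ₂, μ₃ ∈ Z, ⟨μ₁, (DJ_A(z)[J_A(z)μ₂])μ₃⟩ + ⟨μ₂, (DJ_A(z)[J_A(z)μ₃])μ₁⟩ + ⟨μ₃, (DJ_A(z)[J_A(z)μ₁])μ₂⟩ = 0, where DJ_A(z)[v] denotes the derivative of the map z ↦ J_A(z) at z in direction v, then each J_GEN(y) is skew-adjoint and J_GEN satisfies the Jacobi identity on Y: for all y ∈ Y and all μ₁, μ₂, μ₃ ∈ Y, ⟨μ₁, (DJ_GEN(y)[J_GEN(y)μ₂])μ₃⟩ + ⟨μ₂, (DJ_GEN(y)[J_GEN(y)μ₃])μ₁⟩ + ⟨μ₃, (DJ_GEN(y)[J_GEN(y)μ₁])μ₂⟩ = 0. -/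
/-!
`J_GEN(y)` is block diagonal: the `Z`-block `J_A(y.1)` is skew-adjoint by hypothesis, the
`W`-block `-D_skw` is skew-adjoint as the skew part of `D`, and the `ℝ`-block vanishes. Since
only the `Z`-block depends on `y`, and only through `z = y.1`, `DJ_GEN(y)[v] = DJ_A(z)[v.1] ⊕ 0`,
so the Jacobi expression of `J_GEN` on `Y` is that of `J_A` on the `Z`-components.
-/

open RealInnerProductSpace

namespace ContinuousLinearMap

section SkewAdjoint

variable {E : Type*} [NormedAddCommGroup E] [InnerProductSpace ℝ E] [CompleteSpace E]

theorem inner_apply_eq_neg_inner_apply_of_adjoint_eq_neg {T : E →L[ℝ] E} (hT : adjoint T = -T)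
    (u v : E) : ⟪T u, v⟫ = -⟪u, T v⟫ := by
  rw [← adjoint_inner_right, hT, neg_apply, inner_neg_right]

theorem adjoint_skewPart (D : E →L[ℝ] E) :
    adjoint ((1 / 2 : ℝ) • (D - adjoint D)) = -((1 / 2 : ℝ) • (D - adjoint D)) := by
  rw [map_smulₛₗ, map_sub, adjoint_adjoint, ← smul_neg, neg_sub]
  rfl

end SkewAdjoint

section Derivative

variable {𝕜 : Type*} [NontriviallyNormedField 𝕜]
  {X E₁ E₂ F₁ F₂ : Type*} [NormedAddCommGroup X] [NormedSpace 𝕜 X]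
  [NormedAddCommGroup E₁] [NormedSpace 𝕜 E₁] [NormedAddCommGroup E₂] [NormedSpace 𝕜 E₂]
  [NormedAddCommGroup F₁] [NormedSpace 𝕜 F₁] [NormedAddCommGroup F₂] [NormedSpace 𝕜 F₂]

theorem fderiv_prodMap_const_apply {A : X → E₁ →L[𝕜] E₂} {x : X} (hA : DifferentiableAt 𝕜 A x)
    (B : F₁ →L[𝕜] F₂) (v : X) :
    fderiv 𝕜 (fun x => (A x).prodMap B) x v = (fderiv 𝕜 A x v).prodMap 0 := by
  have h : HasFDerivAt (fun x => prodMapL 𝕜 E₁ E₂ F₁ F₂ (A x, B))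
      ((prodMapL 𝕜 E₁ E₂ F₁ F₂).comp ((fderiv 𝕜 A x).prod 0)) x :=
    (prodMapL 𝕜 E₁ E₂ F₁ F₂).hasFDerivAt.comp x (hA.hasFDerivAt.prodMk (hasFDerivAt_const B x))
  simp only [prodMapL_apply] at h
  simp only [h.fderiv, coe_comp, Function.comp_apply, prod_apply, zero_apply, prodMapL_apply]

end Derivative

end ContinuousLinearMap

/-- On `Y = Z × W × ℝ` define
`J_GEN(z,w,e)(a,b,c) := (J_A(z)a, −D_skw b, 0)`.  If `J_A` satisfies the Jacobi
identity, then each `J_GEN(y)` is skew-adjoint (for the product inner product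
`⟨(a,b,c),(a',b',c')⟩ = ⟨a,a'⟩ + ⟨b,b'⟩ + c·c'` on `Y`) and `J_GEN` satisfies the
Jacobi identity on `Y`. -/
theorem generic_poisson_operator_jacobi
    {Z : Type*} [NormedAddCommGroup Z] [InnerProductSpace ℝ Z] [FiniteDimensional ℝ Z]
    {W : Type*} [NormedAddCommGroup W] [InnerProductSpace ℝ W] [FiniteDimensional ℝ W]
    (D : W →L[ℝ] W)
    (JA : Z → Z →L[ℝ] Z) (hJAsmooth : ContDiff ℝ 1 JA)
    (hJAskew : ∀ z : Z, ContinuousLinearMap.adjoint (JA z) = -(JA z))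
    (JG : Z × W × ℝ → (Z × W × ℝ →L[ℝ] Z × W × ℝ))
    (hJG : ∀ (y v : Z × W × ℝ),
      JG y v = (JA y.1 v.1,
        -((((1 : ℝ) / 2) • (D - ContinuousLinearMap.adjoint D)) v.2.1), (0 : ℝ)))
    (hJacobiA : ∀ (z : Z) (μ₁ μ₂ μ₃ : Z),
      ⟪μ₁, (fderiv ℝ JA z ((JA z) μ₂)) μ₃⟫
        + ⟪μ₂, (fderiv ℝ JA z ((JA z) μ₃)) μ₁⟫
        + ⟪μ₃, (fderiv ℝ JA z ((JA z) μ₁)) μ₂⟫ = 0) :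
    ∀ y : Z × W × ℝ,
      -- J_GEN(y) is skew-adjoint for the product inner product on Y
      (∀ u v : Z × W × ℝ,
        ⟪(JG y u).1, v.1⟫ + ⟪(JG y u).2.1, v.2.1⟫ + (JG y u).2.2 * v.2.2
          = -(⟪u.1, (JG y v).1⟫ + ⟪u.2.1, (JG y v).2.1⟫ + u.2.2 * (JG y v).2.2)) ∧
      -- Jacobi identity for J_GEN on Y
      (∀ μ₁ μ₂ μ₃ : Z × W × ℝ,
        (⟪μ₁.1, ((fderiv ℝ JG y (JG y μ₂)) μ₃).1⟫
            + ⟪μ₁.2.1, ((fderiv ℝ JG y (JG y μ₂)) μ₃).2.1⟫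
            + μ₁.2.2 * ((fderiv ℝ JG y (JG y μ₂)) μ₃).2.2)
          + (⟪μ₂.1, ((fderiv ℝ JG y (JG y μ₃)) μ₁).1⟫
            + ⟪μ₂.2.1, ((fderiv ℝ JG y (JG y μ₃)) μ₁).2.1⟫
            + μ₂.2.2 * ((fderiv ℝ JG y (JG y μ₃)) μ₁).2.2)
          + (⟪μ₃.1, ((fderiv ℝ JG y (JG y μ₁)) μ₂).1⟫
            + ⟪μ₃.2.1, ((fderiv ℝ JG y (JG y μ₁)) μ₂).2.1⟫
            + μ₃.2.2 * ((fderiv ℝ JG y (JG y μ₁)) μ₂).2.2) = 0) := by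
  intro y
  set S := ((1 : ℝ) / 2) • (D - ContinuousLinearMap.adjoint D)
  have hS : ContinuousLinearMap.adjoint S = -S := ContinuousLinearMap.adjoint_skewPart D
  have hJG_eq : JG = fun y => (JA y.1).prodMap ((-S).prodMap (0 : ℝ →L[ℝ] ℝ)) :=
    funext fun y => ContinuousLinearMap.ext fun v => by rw [hJG]; rfl
  have hJA : DifferentiableAt ℝ JA y.1 := (hJAsmooth.differentiable one_ne_zero).differentiableAt
  have hdJG (u v : Z × W × ℝ) : fderiv ℝ JG y u v = (fderiv ℝ JA y.1 u.1 v.1, 0, 0) := by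
    rw [hJG_eq, ContinuousLinearMap.fderiv_prodMap_const_apply (A := fun y : Z × W × ℝ => JA y.1)
      (hJA.comp y differentiableAt_fst),
      fderiv_fun_comp y hJA differentiableAt_fst, fderiv_fst]
    rfl
  refine ⟨fun u v => ?_, fun μ₁ μ₂ μ₃ => ?_⟩
  · simp only [hJG, inner_neg_left, inner_neg_right, zero_mul, mul_zero,
      ContinuousLinearMap.inner_apply_eq_neg_inner_apply_of_adjoint_eq_neg (hJAskew y.1),
      ContinuousLinearMap.inner_apply_eq_neg_inner_apply_of_adjoint_eq_neg hS]
    ring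
  · simp only [hdJG, hJG, inner_zero_right, mul_zero, add_zero]
    exact hJacobiA y.1 μ₁.1 μ₂.1 μ₃.1
end
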